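/- arXiv:1012.3281 — 12 statements merged into one kernel-verified Lean document; each statement's English description precedes it below -/
import Mathlib

section
/- If the n×(m+n) block matrix [B, A] is simple positive upper triangular (i.e., its first n columns form an upper triangular matrix with strictly positive diagonal entries), then the first n columns of the controllability matrix K = [B, AB, …, A^{n−1}B] also form an upper triangular matrix with strictly positive diagonal entries. -/
/-- If the block matrix `[B, A]` is simple positive upper triangular (its first `n` columns
form an upper triangular matrix with positive diagonal), then so is the controllability
matrix `K = [B, AB, …, A^{n-1}B]`. -/
theorem stmt1 (n m : ℕ) (hm : 0 < m)
    (B : Matrix (Fin n) (Fin m) ℝ) (A : Matrix (Fin n) (Fin n) ℝ)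
    -- `BA i c` is the entry of `[B, A]` at row `i`, column `c` (0-indexed, `c < m + n`)
    (BA : Fin n → ℕ → ℝ)
    (hBA : ∀ (i : Fin n) (c : ℕ) (hc : c < m + n),
      BA i c = if h : c < m then B i ⟨c, h⟩ else A i ⟨c - m, by omega⟩)
    -- `[B, A]` is simple positive upper triangular
    (hdiag : ∀ i : Fin n, 0 < BA i (i : ℕ))
    (htri : ∀ i j : Fin n, (j : ℕ) < (i : ℕ) → BA i (j : ℕ) = 0)
    -- `K i c` is the entry of `K` at row `i`, column `c` (0-indexed, `c < n * m`):
    -- column `c % m` of block `A^(c / m) B`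
    (K : Fin n → ℕ → ℝ)
    (hK : ∀ (i : Fin n) (c : ℕ), c < n * m →
      K i c = ((A ^ (c / m)) * B) i ⟨c % m, Nat.mod_lt _ hm⟩) :
    (∀ i : Fin n, 0 < K i (i : ℕ)) ∧ ∀ i j : Fin n, (j : ℕ) < (i : ℕ) → K i (j : ℕ) = 0 := by
  -- basic facts about B
  have hB0 : ∀ (i : Fin n) (j : Fin m), (j : ℕ) < (i : ℕ) → B i j = 0 := by
    intro i j hj
    have h := htri i ⟨j, lt_trans hj i.isLt⟩ hj
    have h2 := hBA i (j : ℕ) (by omega)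
    rw [dif_pos j.isLt] at h2
    have h3 := h2.symm.trans h
    simpa using h3
  have hBd : ∀ (i : Fin n) (h : (i : ℕ) < m), 0 < B i ⟨i, h⟩ := by
    intro i h
    have h1 := hdiag i
    have h2 := hBA i (i : ℕ) (by omega)
    rw [dif_pos h] at h2
    rwa [h2] at h1
  -- basic facts about A
  have hA0 : ∀ (i d : Fin n), (d : ℕ) + m < (i : ℕ) → A i d = 0 := by
    intro i d hd
    have h := htri i ⟨(d : ℕ) + m, by omega⟩ (by simpa using hd)
    have h2 := hBA i ((d : ℕ) + m) (by omega)
    rw [dif_neg (by omega)] at h2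
    have h3 := h2.symm.trans h
    have h4 : (⟨(d : ℕ) + m - m, by omega⟩ : Fin n) = d := by
      ext; simp
    rwa [h4] at h3
  have hAd : ∀ (i : Fin n) (h : m ≤ (i : ℕ)), 0 < A i ⟨(i : ℕ) - m, by omega⟩ := by
    intro i h
    have h1 := hdiag i
    have h2 := hBA i (i : ℕ) (by omega)
    rw [dif_neg (by omega)] at h2
    rwa [h2] at h1
  -- powers of A
  have hAk0 : ∀ (k : ℕ) (i d : Fin n), (d : ℕ) + k * m < (i : ℕ) → (A ^ k) i d = 0 := by
    intro k
    induction k with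
    | zero =>
      intro i d hd
      rw [pow_zero]
      exact Matrix.one_apply_ne (by intro h; subst h; omega)
    | succ k ih =>
      intro i d hd
      have e1 : (k + 1) * m = k * m + m := by ring
      rw [pow_succ', Matrix.mul_apply]
      apply Finset.sum_eq_zero
      intro e _
      by_cases he : (e : ℕ) + m < (i : ℕ)
      · rw [hA0 i e he, zero_mul]
      · rw [ih e d (by omega), mul_zero]
  have hAkd : ∀ (k : ℕ) (i : Fin n) (h : k * m ≤ (i : ℕ)),
      0 < (A ^ k) i ⟨(i : ℕ) - k * m, by omega⟩ := by
    intro k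
    induction k with
    | zero =>
      intro i h
      simp [Matrix.one_apply]
    | succ k ih =>
      intro i h
      have e1 : (k + 1) * m = k * m + m := by ring
      have hm' : m ≤ (i : ℕ) := by omega
      rw [pow_succ', Matrix.mul_apply]
      rw [Finset.sum_eq_single (⟨(i : ℕ) - m, by omega⟩ : Fin n)]
      · apply mul_pos (hAd i hm')
        have h1 := ih ⟨(i : ℕ) - m, by omega⟩ (by simp; omega)
        have h2 : (⟨(i : ℕ) - m - k * m, by omega⟩ : Fin n)
            = ⟨(i : ℕ) - (k + 1) * m, by omega⟩ := by
          ext; simp; omega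
        rwa [h2] at h1
      · intro b _ hb
        have hb' : (b : ℕ) ≠ (i : ℕ) - m := fun hc => hb (by ext; simpa using hc)
        by_cases hlt : (b : ℕ) + m < (i : ℕ)
        · rw [hA0 i b hlt, zero_mul]
        · rw [hAk0 k b ⟨(i : ℕ) - (k + 1) * m, by omega⟩ (by simp; omega), mul_zero]
      · intro hne
        exact absurd (Finset.mem_univ _) hne
  -- conclusion
  constructor
  · intro i
    have hin : (i : ℕ) < n * m := by
      calc (i : ℕ) < n := i.isLt
      _ = n * 1 := (Nat.mul_one n).symm
      _ ≤ n * m := Nat.mul_le_mul_left n hm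
    rw [hK i (i : ℕ) hin, Matrix.mul_apply]
    have hd1 := Nat.div_add_mod (i : ℕ) m
    have hd2 : (i : ℕ) / m * m = m * ((i : ℕ) / m) := Nat.mul_comm _ _
    have hjm : (i : ℕ) % m < m := Nat.mod_lt _ hm
    rw [Finset.sum_eq_single (⟨(i : ℕ) % m, by omega⟩ : Fin n)]
    · apply mul_pos
      · have h1 := hAkd ((i : ℕ) / m) i (by omega)
        have h2 : (⟨(i : ℕ) - ((i : ℕ) / m) * m, by omega⟩ : Fin n)
            = ⟨(i : ℕ) % m, by omega⟩ := by ext; simp; omega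
        rwa [h2] at h1
      · have h1 := hBd ⟨(i : ℕ) % m, by omega⟩ (by simpa using hjm)
        convert h1 using 2
    · intro b _ hb
      have hb' : (b : ℕ) ≠ (i : ℕ) % m := fun hc => hb (by ext; simpa using hc)
      by_cases hlt : (i : ℕ) % m < (b : ℕ)
      · rw [hB0 b ⟨(i : ℕ) % m, hjm⟩ hlt, mul_zero]
      · rw [hAk0 ((i : ℕ) / m) i b (by omega), zero_mul]
    · intro hne
      exact absurd (Finset.mem_univ _) hne
  · intro i j hj
    have hjn : (j : ℕ) < n * m := by
      calc (j : ℕ) < n := j.isLt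
      _ = n * 1 := (Nat.mul_one n).symm
      _ ≤ n * m := Nat.mul_le_mul_left n hm
    rw [hK i (j : ℕ) hjn, Matrix.mul_apply]
    have hd1 := Nat.div_add_mod (j : ℕ) m
    have hd2 : (j : ℕ) / m * m = m * ((j : ℕ) / m) := Nat.mul_comm _ _
    have hjm : (j : ℕ) % m < m := Nat.mod_lt _ hm
    apply Finset.sum_eq_zero
    intro d _
    by_cases hlt : (j : ℕ) % m < (d : ℕ)
    · rw [hB0 d ⟨(j : ℕ) % m, hjm⟩ hlt, mul_zero]
    · rw [hAk0 ((j : ℕ) / m) i d (by omega), zero_mul]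
end

section
/- Let [B, A] be an n×(m+n) block matrix with an admissible pivot structure J (B has a pivot-1 column, and the pivot structure induced on A is a staircase form). Then the infinite controllability matrix K = [B, AB, A²B, …] has a full pivot structure: for every k ∈ {1,…,n} some column of K is a pivot-k vector. -/
/-- `v` is a pivot-`k` vector: entry `k` is positive and all later entries vanish. -/
def IsPivot {n : ℕ} (k : Fin n) (v : Fin n → ℝ) : Prop :=
  0 < v k ∧ ∀ j : Fin n, k < j → v j = 0

/-- If `[B, A]` has an admissible pivot structure `J` (`B` has a pivot-1 column and the
induced pivot structure on `A` is a staircase form), then the infinite controllability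
matrix `K = [B, AB, A²B, …]` has a full pivot structure. -/
theorem stmt2 (n m : ℕ) (hn : 0 < n)
    (B : Matrix (Fin n) (Fin m) ℝ) (A : Matrix (Fin n) (Fin n) ℝ)
    (J : Fin n → Fin (m + n)) (hJinj : Function.Injective J)
    -- column `J k` of `[B, A]` is a pivot-`k` vector
    (hpiv : ∀ k : Fin n, IsPivot k (fun i =>
      if h : (J k : ℕ) < m then B i ⟨(J k : ℕ), h⟩
      else A i ⟨(J k : ℕ) - m, by have := (J k).isLt; omega⟩))
    -- `B` has a pivot-1 column
    (hB1 : (J ⟨0, hn⟩ : ℕ) < m)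
    -- the pivot structure induced on `A` is a staircase form
    (hstair : ∀ k k' : Fin n, m ≤ (J k : ℕ) → m ≤ (J k' : ℕ) → k < k' → J k < J k')
    (hrange : (Finset.univ.filter (fun k : Fin n => m ≤ (J k : ℕ))).image
        (fun k => (J k : ℕ) - m)
      = Finset.range ((Finset.univ.filter (fun k : Fin n => m ≤ (J k : ℕ))).card)) :
    ∀ k : Fin n, ∃ (t : ℕ) (i : Fin m), IsPivot k (fun r => ((A ^ t) * B) r i) := by
  classical
  set S := Finset.univ.filter (fun k : Fin n => m ≤ (J k : ℕ)) with hS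
  set p := S.card with hp
  -- every column index `j < p` of `A` is a pivot column for some row `k''`
  have hK : ∀ j : ℕ, j < p → ∃ k'' : Fin n, m ≤ (J k'' : ℕ) ∧ (J k'' : ℕ) - m = j := by
    intro j hj
    have hmem : j ∈ Finset.range p := Finset.mem_range.mpr hj
    rw [← hrange] at hmem
    obtain ⟨k'', hk1, hk2⟩ := Finset.mem_image.mp hmem
    rw [hS, Finset.mem_filter] at hk1
    exact ⟨k'', hk1.2, hk2⟩
  -- a choice function for pivot rows of columns of `A`
  set K : ℕ → Fin n := fun j => if hj : j < p then (hK j hj).choose else ⟨0, hn⟩ with hKdef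
  have hKspec : ∀ j : ℕ, j < p → m ≤ (J (K j) : ℕ) ∧ (J (K j) : ℕ) - m = j := by
    intro j hj
    simp only [hKdef, dif_pos hj]
    exact (hK j hj).choose_spec
  -- main strong induction
  suffices H : ∀ N : ℕ, ∀ k : Fin n, (k : ℕ) ≤ N →
      ∃ (t : ℕ) (i : Fin m), IsPivot k (fun r => ((A ^ t) * B) r i) by
    intro k; exact H k k le_rfl
  intro N
  induction N with
  | zero =>
    intro k hk
    have hk0 : k = ⟨0, hn⟩ := by
      apply Fin.ext; simpa using hk
    subst hk0
    refine ⟨0, ⟨(J ⟨0, hn⟩ : ℕ), hB1⟩, ?_⟩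
    constructor
    · have h1 := (hpiv ⟨0, hn⟩).1
      simp only [dif_pos hB1] at h1
      simpa using h1
    · intro j hj
      have h2 := (hpiv ⟨0, hn⟩).2 j hj
      simp only [dif_pos hB1] at h2
      simpa using h2
  | succ N ih =>
    intro k hk
    by_cases hB : (J k : ℕ) < m
    · refine ⟨0, ⟨(J k : ℕ), hB⟩, ?_⟩
      constructor
      · have h1 := (hpiv k).1
        simp only [dif_pos hB] at h1
        simpa using h1
      · intro j hj
        have h2 := (hpiv k).2 j hj
        simp only [dif_pos hB] at h2
        simpa using h2
    · push_neg at hB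
      set c : ℕ := (J k : ℕ) - m with hcdef
      have hkS : k ∈ S := by rw [hS, Finset.mem_filter]; exact ⟨Finset.mem_univ _, hB⟩
      have hcp : c < p := by
        have : c ∈ Finset.range p := by
          rw [← hrange]
          exact Finset.mem_image.mpr ⟨k, hkS, rfl⟩
        exact Finset.mem_range.mp this
      -- pivot rows of earlier columns are at most `k`
      have hKle : ∀ j : ℕ, j ≤ c → (K j : ℕ) ≤ (k : ℕ) := by
        intro j hj
        have hjp : j < p := lt_of_le_of_lt hj hcp
        obtain ⟨hm1, hm2⟩ := hKspec j hjp
        by_contra hlt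
        push_neg at hlt
        have := hstair k (K j) hB hm1 hlt
        have hJJ : (J k : ℕ) < (J (K j) : ℕ) := this
        omega
      -- pivot rows of columns `< c` are strictly below `k`
      have hKlt : ∀ j : ℕ, j < c → (K j : ℕ) < (k : ℕ) := by
        intro j hj
        have hjp : j < p := lt_trans hj hcp
        obtain ⟨hm1, hm2⟩ := hKspec j hjp
        have hle := hKle j (le_of_lt hj)
        rcases lt_or_eq_of_le hle with h | h
        · exact h
        · exfalso
          have : K j = k := Fin.ext h
          rw [this] at hm2
          omega
      -- counting argument: c < k
      have hck : c < (k : ℕ) := by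
        have hmaps : ∀ j ∈ Finset.range (c + 1), (K j : ℕ) ∈ Finset.Icc 1 (k : ℕ) := by
          intro j hj
          rw [Finset.mem_range] at hj
          have hjc : j ≤ c := Nat.lt_succ_iff.mp hj
          have hjp : j < p := lt_of_le_of_lt hjc hcp
          obtain ⟨hm1, hm2⟩ := hKspec j hjp
          rw [Finset.mem_Icc]
          refine ⟨?_, hKle j hjc⟩
          by_contra h0
          push_neg at h0
          have hKj0 : (K j : ℕ) = 0 := by omega
          have : K j = ⟨0, hn⟩ := Fin.ext (by simp [hKj0])
          rw [this] at hm1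
          omega
        have hinj : Set.InjOn (fun j => ((K j : ℕ))) (Finset.range (c + 1)) := by
          intro j1 h1 j2 h2 he
          simp only [Finset.coe_range, Set.mem_Iio] at h1 h2
          have hj1p : j1 < p := lt_of_lt_of_le h1 (Nat.succ_le_of_lt hcp)
          have hj2p : j2 < p := lt_of_lt_of_le h2 (Nat.succ_le_of_lt hcp)
          have e1 := (hKspec j1 hj1p).2
          have e2 := (hKspec j2 hj2p).2
          have : K j1 = K j2 := Fin.ext he
          rw [this] at e1
          omega
        have hcard := Finset.card_le_card_of_injOn _ hmaps hinj
        simp only [Finset.card_range, Nat.card_Icc] at hcard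
        omega
      -- apply the inductive hypothesis to column `c`
      have hcn : c < n := lt_trans hck k.isLt
      set kc : Fin n := ⟨c, hcn⟩ with hkc
      obtain ⟨t, i, hpc⟩ := ih kc (by
        have : (kc : ℕ) < (k : ℕ) := hck
        omega)
      refine ⟨t + 1, i, ?_, ?_⟩
      · -- positivity at row k
        have hmul : ((A ^ (t + 1)) * B) k i = ∑ j : Fin n, A k j * ((A ^ t) * B) j i := by
          rw [pow_succ', Matrix.mul_assoc, Matrix.mul_apply]
        simp only [hmul]
        rw [Finset.sum_eq_single kc]
        · have hAkc : 0 < A k kc := by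
            have h1 := (hpiv k).1
            simp only [dif_neg (by omega : ¬ (J k : ℕ) < m)] at h1
            convert h1 using 2
          exact mul_pos hAkc hpc.1
        · intro j _ hj
          rcases lt_or_gt_of_ne (fun h : (j : ℕ) = c => hj (Fin.ext h)) with h | h
          · -- j < c : A k j = 0 since pivot row of column j is below k
            have hjp : (j : ℕ) < p := lt_trans h hcp
            obtain ⟨hm1, hm2⟩ := hKspec j hjp
            have hzero := (hpiv (K j)).2 k (by
              have := hKlt j h
              exact this)
            simp only [dif_neg (by omega : ¬ (J (K j) : ℕ) < m)] at hzero
            have : A k j = 0 := by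
              have hjfin : (⟨(J (K j) : ℕ) - m, by have := (J (K j)).isLt; omega⟩ : Fin n) = j :=
                Fin.ext (by simpa using hm2)
              rw [← hjfin]
              exact hzero
            rw [this, zero_mul]
          · -- j > c : column entry of A^t B vanishes
            have : ((A ^ t) * B) j i = 0 := hpc.2 j h
            rw [this, mul_zero]
        · intro h
          exact absurd (Finset.mem_univ kc) h
      · -- zeros below row k
        intro r hr
        have hmul : ((A ^ (t + 1)) * B) r i = ∑ j : Fin n, A r j * ((A ^ t) * B) j i := by
          rw [pow_succ', Matrix.mul_assoc, Matrix.mul_apply]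
        simp only [hmul]
        apply Finset.sum_eq_zero
        intro j _
        by_cases hjc : (j : ℕ) ≤ c
        · -- column j of A has zero entries below its pivot row ≤ k < r
          have hjp : (j : ℕ) < p := lt_of_le_of_lt hjc hcp
          obtain ⟨hm1, hm2⟩ := hKspec j hjp
          have hKr : K j < r := by
            have h1 := hKle j hjc
            have h2 : (k : ℕ) < (r : ℕ) := hr
            exact Fin.lt_def.mpr (by omega)
          have hzero := (hpiv (K j)).2 r hKr
          simp only [dif_neg (by omega : ¬ (J (K j) : ℕ) < m)] at hzero
          have : A r j = 0 := by
            have hjfin : (⟨(J (K j) : ℕ) - m, by have := (J (K j)).isLt; omega⟩ : Fin n) = j :=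
              Fin.ext (by simpa using hm2)
            rw [← hjfin]
            exact hzero
          rw [this, zero_mul]
        · push_neg at hjc
          have : ((A ^ t) * B) j i = 0 := hpc.2 j hjc
          rw [this, mul_zero]
end

section
/- For given positive integers m and n, the number of admissible full pivot structures for an n×(m+n) block matrix [B,A] equals the sum over ℓ from 1 to min(m,n) of ℓ! · C(m,ℓ) · C(n−1, ℓ−1). -/
open Finset

/-- rank of `k` in `S`: number of elements of `S` smaller than `k`. -/
def rkS {n : ℕ} (S : Finset (Fin n)) (k : Fin n) : ℕ := (S.filter (· < k)).card

lemma rkS_lt {n : ℕ} (S : Finset (Fin n)) {k : Fin n} (hk : k ∈ S) : rkS S k < S.card := by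
  apply Finset.card_lt_card
  exact (Finset.ssubset_iff_of_subset (filter_subset _ _)).2 ⟨k, hk, by simp⟩

lemma rkS_mono {n : ℕ} (S : Finset (Fin n)) {k k' : Fin n} (hk : k ∈ S) (h : k < k') :
    rkS S k < rkS S k' := by
  apply Finset.card_lt_card
  have hsub : S.filter (· < k) ⊆ S.filter (· < k') := by
    intro a ha
    rw [Finset.mem_filter] at ha ⊢
    exact ⟨ha.1, lt_trans ha.2 h⟩
  exact (Finset.ssubset_iff_of_subset hsub).2
    ⟨k, Finset.mem_filter.2 ⟨hk, h⟩, by simp⟩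

lemma rkS_injOn {n : ℕ} (S : Finset (Fin n)) : Set.InjOn (rkS S) S := by
  intro a ha b hb hab
  by_contra hne
  rcases lt_or_gt_of_ne hne with h | h
  · exact absurd hab (Nat.ne_of_lt (rkS_mono S ha h))
  · exact absurd hab.symm (Nat.ne_of_lt (rkS_mono S hb h))

lemma rkS_image {n : ℕ} (S : Finset (Fin n)) : S.image (rkS S) = Finset.range S.card := by
  apply Finset.eq_of_subset_of_card_le
  · intro x hx
    obtain ⟨k, hk, rfl⟩ := Finset.mem_image.1 hx
    exact Finset.mem_range.2 (rkS_lt S hk)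
  · rw [Finset.card_range, Finset.card_image_of_injOn (rkS_injOn S)]

lemma key_rank {n m : ℕ} (J : Fin n → Fin (m + n))
    (hmono : ∀ k k' : Fin n, m ≤ (J k : ℕ) → m ≤ (J k' : ℕ) → k < k' → J k < J k')
    (himg : (Finset.univ.filter (fun k : Fin n => m ≤ (J k : ℕ))).image (fun k => (J k : ℕ) - m)
        = Finset.range ((Finset.univ.filter (fun k : Fin n => m ≤ (J k : ℕ))).card))
    {k : Fin n} (hk : m ≤ (J k : ℕ)) :
    (J k : ℕ) = m + rkS (Finset.univ.filter (fun k : Fin n => m ≤ (J k : ℕ))) k := by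
  set S : Finset (Fin n) := Finset.univ.filter (fun k : Fin n => m ≤ (J k : ℕ)) with hSdef
  have hmemS : ∀ a : Fin n, a ∈ S ↔ m ≤ (J a : ℕ) := by
    intro a; simp [hSdef]
  set s : ℕ := S.card with hs
  have hcard : S.card = s := rfl
  set e : Fin s ↪o Fin n := S.orderEmbOfFin hcard with he
  have hemem : ∀ i, e i ∈ S := fun i => Finset.orderEmbOfFin_mem S hcard i
  have hu : (fun i : Fin s => (J (e i) : ℕ) - m) =
      (Finset.range s).orderEmbOfFin (Finset.card_range s) := by
    apply Finset.orderEmbOfFin_unique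
    · intro i
      rw [← himg]
      exact Finset.mem_image.2 ⟨e i, hemem i, rfl⟩
    · intro i j hij
      have h1 : m ≤ (J (e i) : ℕ) := (hmemS _).1 (hemem i)
      have h2 : m ≤ (J (e j) : ℕ) := (hmemS _).1 (hemem j)
      have h3 := hmono _ _ h1 h2 (e.strictMono hij)
      show (J (e i) : ℕ) - m < (J (e j) : ℕ) - m
      have h4 : (J (e i) : ℕ) < (J (e j) : ℕ) := h3
      omega
  have hv : (fun i : Fin s => rkS S (e i)) =
      (Finset.range s).orderEmbOfFin (Finset.card_range s) := by
    apply Finset.orderEmbOfFin_unique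
    · intro i
      exact Finset.mem_range.2 (rkS_lt S (hemem i))
    · intro i j hij
      show rkS S (e i) < rkS S (e j)
      exact rkS_mono S (hemem i) (e.strictMono hij)
  have huv : ∀ i, (J (e i) : ℕ) - m = rkS S (e i) := fun i => by
    rw [show (J (e i) : ℕ) - m = (fun i : Fin s => (J (e i) : ℕ) - m) i from rfl, hu, ← hv]
  have hkS : k ∈ S := (hmemS k).2 hk
  obtain ⟨i, hi⟩ : ∃ i, e i = k := by
    have : (k : Fin n) ∈ Set.range e := by
      rw [Finset.range_orderEmbOfFin]; exact_mod_cast hkS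
    exact this
  have := huv i
  rw [hi] at this
  omega

def Phi (n m : ℕ)
    (x : Σ S : Finset (Fin n), ({k : Fin n // k ∉ S} ↪ Fin m)) : Fin n → Fin (m + n) :=
  fun k =>
    if h : k ∈ x.1 then
      ⟨m + rkS x.1 k, by
        have h1 := rkS_lt x.1 h
        have h2 : x.1.card ≤ n := le_trans (Finset.card_le_univ _) (by simp)
        omega⟩
    else ⟨(x.2 ⟨k, h⟩ : ℕ), lt_of_lt_of_le (x.2 ⟨k, h⟩).2 (Nat.le_add_right m n)⟩

lemma Phi_mem_iff (n m : ℕ) (x : Σ S : Finset (Fin n), ({k : Fin n // k ∉ S} ↪ Fin m))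
    (k : Fin n) : m ≤ (Phi n m x k : ℕ) ↔ k ∈ x.1 := by
  unfold Phi
  by_cases h : k ∈ x.1
  · simp only [h, dif_pos, iff_true]
    exact Nat.le_add_right m _
  · simp only [h, dif_neg, iff_false, not_le]
    exact (x.2 ⟨k, h⟩).2

lemma Phi_filter (n m : ℕ) (x : Σ S : Finset (Fin n), ({k : Fin n // k ∉ S} ↪ Fin m)) :
    Finset.univ.filter (fun k : Fin n => m ≤ (Phi n m x k : ℕ)) = x.1 := by
  ext k; simp [Phi_mem_iff]

lemma Phi_val_mem (n m : ℕ) (x : Σ S : Finset (Fin n), ({k : Fin n // k ∉ S} ↪ Fin m))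
    {k : Fin n} (h : k ∈ x.1) : (Phi n m x k : ℕ) = m + rkS x.1 k := by
  unfold Phi; simp [h]

lemma Phi_val_notmem (n m : ℕ) (x : Σ S : Finset (Fin n), ({k : Fin n // k ∉ S} ↪ Fin m))
    {k : Fin n} (h : k ∉ x.1) : (Phi n m x k : ℕ) = (x.2 ⟨k, h⟩ : ℕ) := by
  unfold Phi; simp [h]

lemma Phi_inj (n m : ℕ) (x : Σ S : Finset (Fin n), ({k : Fin n // k ∉ S} ↪ Fin m)) :
    Function.Injective (Phi n m x) := by
  intro a b hab
  have hab' : (Phi n m x a : ℕ) = (Phi n m x b : ℕ) := congrArg Fin.val hab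
  by_cases ha : a ∈ x.1 <;> by_cases hb : b ∈ x.1
  · rw [Phi_val_mem n m x ha, Phi_val_mem n m x hb] at hab'
    exact rkS_injOn x.1 ha hb (by omega)
  · rw [Phi_val_mem n m x ha, Phi_val_notmem n m x hb] at hab'
    have := (x.2 ⟨b, hb⟩).2; omega
  · rw [Phi_val_notmem n m x ha, Phi_val_mem n m x hb] at hab'
    have := (x.2 ⟨a, ha⟩).2; omega
  · rw [Phi_val_notmem n m x ha, Phi_val_notmem n m x hb] at hab'
    have h5 : (⟨a, ha⟩ : {k : Fin n // k ∉ x.1}) = ⟨b, hb⟩ := x.2.injective (Fin.ext hab')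
    exact congrArg Subtype.val h5

lemma Phi_mono (n m : ℕ) (x : Σ S : Finset (Fin n), ({k : Fin n // k ∉ S} ↪ Fin m))
    (k k' : Fin n) (hk : m ≤ (Phi n m x k : ℕ)) (hk' : m ≤ (Phi n m x k' : ℕ))
    (h : k < k') : Phi n m x k < Phi n m x k' := by
  rw [Phi_mem_iff] at hk hk'
  have h1 := Phi_val_mem n m x hk
  have h2 := Phi_val_mem n m x hk'
  have h3 := rkS_mono x.1 hk h
  show (Phi n m x k : ℕ) < (Phi n m x k' : ℕ)
  omega

lemma Phi_img (n m : ℕ) (x : Σ S : Finset (Fin n), ({k : Fin n // k ∉ S} ↪ Fin m)) :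
    (Finset.univ.filter (fun k : Fin n => m ≤ (Phi n m x k : ℕ))).image
      (fun k => (Phi n m x k : ℕ) - m)
      = Finset.range ((Finset.univ.filter (fun k : Fin n => m ≤ (Phi n m x k : ℕ))).card) := by
  rw [Phi_filter]
  rw [← rkS_image x.1]
  apply Finset.image_congr
  intro a ha
  have h1 := Phi_val_mem n m x ha
  show (Phi n m x a : ℕ) - m = rkS x.1 a
  omega

lemma arith (n m : ℕ) (hn : 0 < n) :
    ∑ j ∈ Finset.range n, (n - 1).choose j * m.descFactorial (n - j) =
    ∑ ℓ ∈ Finset.Icc 1 (min m n),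
      Nat.factorial ℓ * Nat.choose m ℓ * Nat.choose (n - 1) (ℓ - 1) := by
  have h1 : ∑ j ∈ Finset.range n, (n - 1).choose j * m.descFactorial (n - j) =
      ∑ ℓ ∈ Finset.Icc 1 n, Nat.factorial ℓ * Nat.choose m ℓ * Nat.choose (n - 1) (ℓ - 1) := by
    apply Finset.sum_nbij' (i := fun j => n - j) (j := fun ℓ => n - ℓ)
    · intro a ha
      simp only [Finset.mem_range] at ha
      simp only [Finset.mem_Icc]
      omega
    · intro a ha
      simp only [Finset.mem_Icc] at ha
      simp only [Finset.mem_range]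
      omega
    · intro a ha
      simp only [Finset.mem_range] at ha
      omega
    · intro a ha
      simp only [Finset.mem_Icc] at ha
      omega
    · intro j hj
      simp only [Finset.mem_range] at hj
      have hc : (n - 1).choose j = (n - 1).choose (n - j - 1) := by
        rw [show n - j - 1 = (n - 1) - j by omega]
        exact (Nat.choose_symm (by omega)).symm
      rw [hc, Nat.descFactorial_eq_factorial_mul_choose,
        show n - j - 1 = (n - j) - 1 by omega]
      ring
  rw [h1]
  symm
  apply Finset.sum_subset
  · apply Finset.Icc_subset_Icc_right
    exact min_le_right m n
  · intro ℓ hℓ hℓ'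
    simp only [Finset.mem_Icc] at hℓ hℓ'
    have hmℓ : m < ℓ := by omega
    rw [Nat.choose_eq_zero_of_lt hmℓ]
    ring

lemma cardD (n m : ℕ) (hn : 0 < n) :
    Nat.card {x : Σ S : Finset (Fin n), ({k : Fin n // k ∉ S} ↪ Fin m) //
        (⟨0, hn⟩ : Fin n) ∉ x.1} =
    ∑ j ∈ Finset.range n, (n - 1).choose j * m.descFactorial (n - j) := by
  classical
  let E : {x : Σ S : Finset (Fin n), ({k : Fin n // k ∉ S} ↪ Fin m) //
        (⟨0, hn⟩ : Fin n) ∉ x.1} ≃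
      Σ S : {S : Finset (Fin n) // (⟨0, hn⟩ : Fin n) ∉ S}, ({k : Fin n // k ∉ S.1} ↪ Fin m) :=
    { toFun := fun x => ⟨⟨x.1.1, x.2⟩, x.1.2⟩
      invFun := fun x => ⟨⟨x.1.1, x.2⟩, x.1.2⟩
      left_inv := fun x => rfl
      right_inv := fun x => rfl }
  rw [Nat.card_congr E, Nat.card_eq_fintype_card, Fintype.card_sigma]
  have hterm : ∀ S : {S : Finset (Fin n) // (⟨0, hn⟩ : Fin n) ∉ S},
      Fintype.card ({k : Fin n // k ∉ S.1} ↪ Fin m) = m.descFactorial (n - S.1.card) := by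
    intro S
    rw [Fintype.card_embedding_eq, Fintype.card_fin]
    congr 1
    rw [Fintype.card_subtype_compl, Fintype.card_fin, Fintype.card_coe]
  simp_rw [hterm]
  rw [← Finset.sum_subtype (Finset.univ.filter
      (fun S : Finset (Fin n) => (⟨0, hn⟩ : Fin n) ∉ S)) (by simp)
      (fun S => m.descFactorial (n - S.card))]
  have hpow : Finset.univ.filter (fun S : Finset (Fin n) => (⟨0, hn⟩ : Fin n) ∉ S) =
      (Finset.univ.erase (⟨0, hn⟩ : Fin n)).powerset := by
    ext S
    simp only [Finset.mem_filter, Finset.mem_univ, true_and, Finset.mem_powerset,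
      Finset.subset_erase, Finset.subset_univ]
  rw [hpow, Finset.sum_powerset_apply_card (fun j => m.descFactorial (n - j))]
  have hcard : (Finset.univ.erase (⟨0, hn⟩ : Fin n)).card = n - 1 := by
    rw [Finset.card_erase_of_mem (Finset.mem_univ _), Finset.card_univ, Fintype.card_fin]
  rw [hcard, show n - 1 + 1 = n by omega]
  simp [smul_eq_mul]

/-- The number of admissible full pivot structures for an `n × (m+n)` block matrix `[B, A]`
equals `∑_{ℓ=1}^{min m n} ℓ! · C(m, ℓ) · C(n-1, ℓ-1)`. An admissible full pivot structure
is an injective assignment `J` of a distinct pivot column to each row index such that the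
first pivot column lies in `B` and the induced pivot structure on `A` is a staircase form. -/
theorem stmt3 (n m : ℕ) (hn : 0 < n) (hm : 0 < m) :
    Nat.card {J : Fin n → Fin (m + n) //
      Function.Injective J ∧
      (J ⟨0, hn⟩ : ℕ) < m ∧
      (∀ k k' : Fin n, m ≤ (J k : ℕ) → m ≤ (J k' : ℕ) → k < k' → J k < J k') ∧
      (Finset.univ.filter (fun k : Fin n => m ≤ (J k : ℕ))).image (fun k => (J k : ℕ) - m)
        = Finset.range ((Finset.univ.filter (fun k : Fin n => m ≤ (J k : ℕ))).card)} =
    ∑ ℓ ∈ Finset.Icc 1 (min m n),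
      Nat.factorial ℓ * Nat.choose m ℓ * Nat.choose (n - 1) (ℓ - 1) := by
  rw [← arith n m hn, ← cardD n m hn]
  refine (Nat.card_eq_of_bijective
    (fun x => ⟨Phi n m x.1, Phi_inj n m x.1,
      by
        have h0 := Phi_val_notmem n m x.1 x.2
        rw [h0]
        exact (x.1.2 ⟨⟨0, hn⟩, x.2⟩).2,
      Phi_mono n m x.1, Phi_img n m x.1⟩) ⟨?_, ?_⟩).symm
  · rintro ⟨⟨S, f⟩, hS⟩ ⟨⟨S', f'⟩, hS'⟩ h
    have hJ : Phi n m ⟨S, f⟩ = Phi n m ⟨S', f'⟩ := congrArg Subtype.val h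
    have hSS : S = S' := by
      have h1 : Finset.univ.filter (fun k : Fin n => m ≤ (Phi n m ⟨S, f⟩ k : ℕ)) = S :=
        Phi_filter n m ⟨S, f⟩
      have h2 : Finset.univ.filter (fun k : Fin n => m ≤ (Phi n m ⟨S', f'⟩ k : ℕ)) = S' :=
        Phi_filter n m ⟨S', f'⟩
      rw [hJ] at h1
      exact h1.symm.trans h2
    subst hSS
    have hff : f = f' := by
      apply DFunLike.ext
      rintro ⟨k, hk⟩
      apply Fin.ext
      rw [← Phi_val_notmem n m ⟨S, f⟩ hk, ← Phi_val_notmem n m ⟨S, f'⟩ hk, hJ]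
    subst hff
    rfl
  · rintro ⟨J, hinj, h0, hmono, himg⟩
    set S : Finset (Fin n) := Finset.univ.filter (fun k : Fin n => m ≤ (J k : ℕ)) with hSdef
    have hmemS : ∀ a : Fin n, a ∈ S ↔ m ≤ (J a : ℕ) := fun a => by simp [hSdef]
    have hS0 : (⟨0, hn⟩ : Fin n) ∉ S := fun h => by
      have := (hmemS _).1 h; omega
    refine ⟨⟨⟨S, ⟨fun k => ⟨(J k.1 : ℕ), ?_⟩, ?_⟩⟩, hS0⟩, ?_⟩
    · have : ¬ m ≤ (J k.1 : ℕ) := fun h => k.2 ((hmemS _).2 h)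
      omega
    · rintro ⟨a, ha⟩ ⟨b, hb⟩ hab
      have hv := congrArg Fin.val hab
      exact Subtype.ext (hinj (Fin.ext hv))
    · apply Subtype.ext
      funext k
      apply Fin.ext
      by_cases hk : k ∈ S
      · rw [Phi_val_mem n m _ hk]
        exact (key_rank J hmono himg ((hmemS k).1 hk)).symm
      · rw [Phi_val_notmem n m _ hk]
        rfl
end

section
/- Let J be an admissible pivot structure for [B,A], determined by the column-oriented pivot structure (q₁,…,q_m) of B (distinct nonzero values, containing the value 1), with successor function S defined by listing the elements of {1,…,n} not among {q₁,…,q_m} in increasing order as S(1),…,S(n−p_B) and S(k) = 0 otherwise, S(0) = 0. Then the pivot positions of the columns of the controllability matrix K = [B, AB, …, A^{n−1}B] are given by the m×n array Y with y_{i,1} = qᵢ and y_{i,j+1} = S(y_{i,j}): column i of block A^{j−1}B is a pivot-y_{i,j} vector whenever y_{i,j} > 0. -/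
/-- `v` is a pivot-`k` vector (1-indexed): entry `k` (i.e. index `k-1`) is positive and all
entries in positions `> k` vanish. -/
def PivotAt (n : ℕ) (k : ℕ) (v : Fin n → ℝ) : Prop :=
  ∃ h : k - 1 < n, 1 ≤ k ∧ 0 < v ⟨k - 1, h⟩ ∧ ∀ j : Fin n, k ≤ (j : ℕ) → v j = 0


lemma pivot_step (n : ℕ) (A : Matrix (Fin n) (Fin n) ℝ) (S : ℕ → ℕ) (ℓ : ℕ)
    (hℓ1 : 1 ≤ ℓ)
    (hA : ∀ ℓ' : ℕ, ∀ (h1 : 1 ≤ ℓ') (_ : ℓ' ≤ ℓ) (h3 : ℓ' - 1 < n),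
      PivotAt n (S ℓ') (fun r => A r ⟨ℓ' - 1, h3⟩))
    (hmono : ∀ ℓ', 1 ≤ ℓ' → ℓ' < ℓ → S ℓ' < S ℓ)
    (v : Fin n → ℝ) (hv : PivotAt n ℓ v) :
    PivotAt n (S ℓ) (fun r => ∑ c, A r c * v c) := by
  obtain ⟨hℓn, -, hvpos, hvzero⟩ := hv
  obtain ⟨hSn, hS1, hApos, hAzero⟩ := hA ℓ hℓ1 le_rfl hℓn
  -- general vanishing claim
  have hzero : ∀ r : Fin n, S ℓ - 1 ≤ (r : ℕ) → ∀ c : Fin n, (c : ℕ) + 1 ≠ ℓ →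
      A r c * v c = 0 := by
    intro r hr c hc
    rcases lt_or_ge (c : ℕ) (ℓ - 1) with h | h
    · -- column c corresponds to ℓ' = c+1 < ℓ
      have h1 : 1 ≤ (c : ℕ) + 1 := by omega
      have h2 : (c : ℕ) + 1 < ℓ := by omega
      obtain ⟨hSn', hS1', hApos', hAzero'⟩ := hA ((c : ℕ) + 1) h1 h2.le (by omega)
      have hSlt : S ((c : ℕ) + 1) < S ℓ := hmono _ h1 h2
      have : A r ⟨(c : ℕ) + 1 - 1, by omega⟩ = 0 := hAzero' r (by omega)
      have hce : (⟨(c : ℕ) + 1 - 1, by omega⟩ : Fin n) = c := by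
        apply Fin.ext; simp
      rw [hce] at this
      rw [this, zero_mul]
    · have : v c = 0 := hvzero c (by omega)
      rw [this, mul_zero]
  refine ⟨hSn, hS1, ?_, ?_⟩
  · show 0 < ∑ c, A ⟨S ℓ - 1, hSn⟩ c * v c
    have hsum : ∑ c, A ⟨S ℓ - 1, hSn⟩ c * v c
        = A ⟨S ℓ - 1, hSn⟩ ⟨ℓ - 1, hℓn⟩ * v ⟨ℓ - 1, hℓn⟩ := by
      apply Finset.sum_eq_single
      · intro c _ hc
        apply hzero _ le_rfl
        intro h
        apply hc
        apply Fin.ext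
        simp; omega
      · intro h; exact absurd (Finset.mem_univ _) h
    rw [hsum]
    exact mul_pos hApos hvpos
  · intro r hr
    show ∑ c, A r c * v c = 0
    apply Finset.sum_eq_zero
    intro c _
    rcases eq_or_ne ((c : ℕ) + 1) ℓ with h | h
    · have hce : (⟨ℓ - 1, hℓn⟩ : Fin n) = c := by apply Fin.ext; simp; omega
      have : A r ⟨ℓ - 1, hℓn⟩ = 0 := hAzero r (by omega)
      rw [hce] at this
      rw [this, zero_mul]
    · exact hzero r (by omega) c h

/-- For an admissible pivot structure determined by the column pivot structure
`(q₁, …, q_m)` of `B` with successor function `S`, the pivot positions of the columns of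
the controllability matrix are given by the array `Y` with `y_{i,1} = qᵢ` and
`y_{i,j+1} = S(y_{i,j})`: column `i` of block `A^{j-1}B` is a pivot-`y_{i,j}` vector
whenever `y_{i,j} > 0`. -/
theorem stmt5 (n m : ℕ)
    (B : Matrix (Fin n) (Fin m) ℝ) (A : Matrix (Fin n) (Fin n) ℝ)
    (q : Fin m → ℕ) (hqle : ∀ i, q i ≤ n)
    (hqdist : ∀ i i' : Fin m, q i ≠ 0 → q i = q i' → i = i')
    (hq1 : ∃ i, q i = 1)
    (pB : ℕ) (hpB : pB = (Finset.univ.filter (fun i : Fin m => q i ≠ 0)).card)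
    (S : ℕ → ℕ) (hS0 : S 0 = 0)
    (hSmono : ∀ k k' : ℕ, 1 ≤ k → k < k' → k' ≤ n - pB → S k < S k')
    (hSrange : (Finset.Icc 1 (n - pB)).image S
      = Finset.Icc 1 n \ Finset.univ.image q)
    (hSzero : ∀ k, n - pB < k → S k = 0)
    -- column `i` of `B` is a pivot-`qᵢ` vector whenever `qᵢ ≠ 0`
    (hBcol : ∀ i : Fin m, q i ≠ 0 → PivotAt n (q i) (fun r => B r i))
    -- staircase form of `A`: column `ℓ` of `A` is a pivot-`S ℓ` vector for `1 ≤ ℓ ≤ n - pB`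
    (hAcol : ∀ ℓ : ℕ, ∀ (h1 : 1 ≤ ℓ) (h2 : ℓ ≤ n - pB),
      PivotAt n (S ℓ) (fun r => A r ⟨ℓ - 1, by omega⟩))
    (Y : Fin m → ℕ → ℕ)
    (hY1 : ∀ i, Y i 1 = q i)
    (hYrec : ∀ (i : Fin m) (j : ℕ), 1 ≤ j → Y i (j + 1) = S (Y i j)) :
    ∀ (i : Fin m) (j : ℕ), 1 ≤ j → j ≤ n → Y i j ≠ 0 →
      PivotAt n (Y i j) (fun r => ((A ^ (j - 1)) * B) r i) := by

  intro i j
  induction j with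
  | zero => intro h; omega
  | succ j ih =>
    intro h1 h2 hne
    rcases Nat.eq_zero_or_pos j with hj0 | hj1
    · subst hj0
      have hq : Y i 1 = q i := hY1 i
      rw [hq] at hne ⊢
      have := hBcol i hne
      simpa [Matrix.one_mul] using this
    · have hrec : Y i (j + 1) = S (Y i j) := hYrec i j hj1
      have hYj0 : Y i j ≠ 0 := by
        intro h; rw [hrec, h, hS0] at hne; exact hne rfl
      have hYjle : Y i j ≤ n - pB := by
        by_contra h
        push_neg at h
        rw [hrec, hSzero _ h] at hne; exact hne rfl
      have hprev := ih hj1 (by omega) hYj0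
      rw [hrec]
      have hmul : ∀ r : Fin n, ((A ^ (j + 1 - 1)) * B) r i
          = ∑ c, A r c * ((A ^ (j - 1)) * B) c i := by
        intro r
        have : A ^ (j + 1 - 1) = A * A ^ (j - 1) := by
          have : j + 1 - 1 = (j - 1) + 1 := by omega
          rw [this, pow_succ']
        rw [this, Matrix.mul_assoc, Matrix.mul_apply]
      have := pivot_step n A S (Y i j) (by omega)
        (fun ℓ' h1' h2' h3' => hAcol ℓ' h1' (le_trans h2' hYjle))
        (fun ℓ' h1' h2' => hSmono ℓ' (Y i j) h1' h2' hYjle)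
        (fun r => ((A ^ (j - 1)) * B) r i) hprev
      obtain ⟨hw, ha, hb, hc⟩ := this
      refine ⟨hw, ha, ?_, ?_⟩
      · show 0 < ((A ^ (j + 1 - 1)) * B) ⟨S (Y i j) - 1, hw⟩ i
        rw [hmul]; exact hb
      · intro r hr
        show ((A ^ (j + 1 - 1)) * B) r i = 0
        rw [hmul]; exact hc r hr
end

section
/- Let Y be an m×n array in which each of the values 1,2,…,n occurs exactly once and all other entries are 0, constructed from distinct values q₁,…,q_m ∈ {0,…,n} containing 1, by y_{i,1} = qᵢ and y_{i,j+1} = S(y_{i,j}), where S(0) = 0 and S⁺ is the increasing enumeration of {1,…,n} \ {q₁,…,q_m} extended by zero. Then Y is an admissible numbered Young diagram: (i) y_{i,j+1} > 0 implies y_{i,j} > 0; (ii) the values n−p_B+1,…,n occur in distinct rows as the last nonzero entries of those rows, where p_B is the number of nonzero rows; (iii) y_{i,j+1} > y_{i',j'+1} > 0 implies y_{i,j} > y_{i',j'} > 0. -/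
/-- The array `Y` built from distinct values `q₁, …, q_m` (containing `1`) by
`y_{i,1} = qᵢ` and `y_{i,j+1} = S(y_{i,j})`, in which each of `1, …, n` occurs exactly
once, is an admissible numbered Young diagram: (i) rows are left-aligned; (ii) the values
`n - p_B + 1, …, n` occur in distinct rows as the last nonzero entries of those rows;
(iii) `y_{i,j+1} > y_{i',j'+1} > 0` implies `y_{i,j} > y_{i',j'} > 0`. -/
theorem stmt7 (m n : ℕ) (q : Fin m → ℕ) (hqle : ∀ i, q i ≤ n)
    (hqdist : ∀ i i' : Fin m, q i ≠ 0 → q i = q i' → i = i')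
    (hq1 : ∃ i, q i = 1)
    (pB : ℕ) (hpB : pB = (Finset.univ.filter (fun i : Fin m => q i ≠ 0)).card)
    (S : ℕ → ℕ) (hS0 : S 0 = 0)
    (hSmono : ∀ k k' : ℕ, 1 ≤ k → k < k' → k' ≤ n - pB → S k < S k')
    (hSrange : (Finset.Icc 1 (n - pB)).image S = Finset.Icc 1 n \ Finset.univ.image q)
    (hSzero : ∀ k, n - pB < k → S k = 0)
    (Y : Fin m → ℕ → ℕ)
    (hY1 : ∀ i, Y i 1 = q i)
    (hYrec : ∀ (i : Fin m) (j : ℕ), 1 ≤ j → Y i (j + 1) = S (Y i j))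
    -- each of the values `1, …, n` occurs exactly once in `Y` (positions `1 ≤ j ≤ n`)
    (hYnum : ∀ v, 1 ≤ v → v ≤ n →
      ∃! p : Fin m × ℕ, 1 ≤ p.2 ∧ p.2 ≤ n ∧ Y p.1 p.2 = v) :
    -- (i)
    (∀ (i : Fin m) (j : ℕ), 1 ≤ j → 0 < Y i (j + 1) → 0 < Y i j) ∧
    -- (ii)
    (∃ f : ℕ → Fin m,
      (∀ v, n - pB + 1 ≤ v → v ≤ n →
        ∃ j, 1 ≤ j ∧ j ≤ n ∧ Y (f v) j = v ∧ ∀ j', j < j' → Y (f v) j' = 0) ∧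
      Set.InjOn f (Set.Icc (n - pB + 1) n)) ∧
    -- (iii)
    (∀ (i i' : Fin m) (j j' : ℕ), 1 ≤ j → 1 ≤ j' →
      Y i' (j' + 1) < Y i (j + 1) → 0 < Y i' (j' + 1) →
      (0 < Y i' j' ∧ Y i' j' < Y i j)) := by
  classical
  have hne : Nonempty (Fin m) := ⟨hq1.choose⟩
  have hafter : ∀ (i : Fin m) (j : ℕ), 1 ≤ j → n - pB < Y i j →
      ∀ j', j < j' → Y i j' = 0 := by
    intro i j hj hv j' hjj'
    obtain ⟨d, rfl⟩ : ∃ d, j' = j + 1 + d := ⟨j' - j - 1, by omega⟩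
    clear hjj'
    induction d with
    | zero => rw [hYrec i j hj, hSzero _ hv]
    | succ d ih =>
      have he : j + 1 + (d + 1) = (j + 1 + d) + 1 := by ring
      rw [he, hYrec i (j + 1 + d) (by omega), ih, hS0]
  refine ⟨?_, ?_, ?_⟩
  · intro i j hj hpos
    rcases Nat.eq_zero_or_pos (Y i j) with h | h
    · rw [hYrec i j hj, h, hS0] at hpos; omega
    · exact h
  · have hex : ∀ v, n - pB + 1 ≤ v → v ≤ n →
        ∃ p : Fin m × ℕ, 1 ≤ p.2 ∧ p.2 ≤ n ∧ Y p.1 p.2 = v := fun v h1 h2 =>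
      (hYnum v (by omega) h2).exists
    refine ⟨fun v => if h : n - pB + 1 ≤ v ∧ v ≤ n then (hex v h.1 h.2).choose.1
      else Classical.arbitrary (Fin m), ?_, ?_⟩
    · intro v h1 h2
      have hp := (hex v h1 h2).choose_spec
      have hfv : (if h : n - pB + 1 ≤ v ∧ v ≤ n then (hex v h.1 h.2).choose.1
          else Classical.arbitrary (Fin m)) = (hex v h1 h2).choose.1 := dif_pos ⟨h1, h2⟩
      beta_reduce
      rw [hfv]
      refine ⟨(hex v h1 h2).choose.2, hp.1, hp.2.1, hp.2.2, ?_⟩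
      intro j' hj'
      exact hafter _ _ hp.1 (by rw [hp.2.2]; omega) j' hj'
    · intro v hv v' hv' hfv
      simp only [Set.mem_Icc] at hv hv'
      by_contra hvv
      beta_reduce at hfv
      have h1 : (if h : n - pB + 1 ≤ v ∧ v ≤ n then (hex v h.1 h.2).choose.1
          else Classical.arbitrary (Fin m)) = (hex v hv.1 hv.2).choose.1 := dif_pos ⟨hv.1, hv.2⟩
      have h2 : (if h : n - pB + 1 ≤ v' ∧ v' ≤ n then (hex v' h.1 h.2).choose.1
          else Classical.arbitrary (Fin m)) = (hex v' hv'.1 hv'.2).choose.1 := dif_pos ⟨hv'.1, hv'.2⟩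
      rw [h1, h2] at hfv
      have hp := (hex v hv.1 hv.2).choose_spec
      have hp' := (hex v' hv'.1 hv'.2).choose_spec
      rcases lt_trichotomy (hex v hv.1 hv.2).choose.2 (hex v' hv'.1 hv'.2).choose.2 with h | h | h
      · have := hafter _ _ hp.1 (by rw [hp.2.2]; omega) _ h
        rw [hfv] at this
        rw [hp'.2.2] at this
        omega
      · have : Y (hex v hv.1 hv.2).choose.1 (hex v hv.1 hv.2).choose.2
            = Y (hex v' hv'.1 hv'.2).choose.1 (hex v' hv'.1 hv'.2).choose.2 := by
          rw [hfv, h]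
        rw [hp.2.2, hp'.2.2] at this
        exact hvv this
      · have := hafter _ _ hp'.1 (by rw [hp'.2.2]; omega) _ h
        rw [← hfv] at this
        rw [hp.2.2] at this
        omega
  · intro i i' j j' hj hj' hlt hpos
    rw [hYrec i j hj, hYrec i' j' hj'] at hlt
    rw [hYrec i' j' hj'] at hpos
    have h1 : 1 ≤ Y i' j' := by
      rcases Nat.eq_zero_or_pos (Y i' j') with h | h
      · rw [h, hS0] at hpos; omega
      · exact h
    have h2 : Y i' j' ≤ n - pB := by
      by_contra h
      rw [hSzero _ (by omega)] at hpos; omega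
    refine ⟨h1, ?_⟩
    by_contra h
    push_neg at h
    rcases eq_or_lt_of_le h with he | hl
    · rw [he] at hlt; omega
    · rcases Nat.eq_zero_or_pos (Y i j) with h0 | h0
      · rw [h0, hS0] at hlt; omega
      · have := hSmono (Y i j) (Y i' j') h0 hl h2
        omega
end

section
/- Let Y ∈ 𝒴(m,n) be an admissible numbered Young diagram (satisfying properties (i), (ii), (iii) below). Define S : {0,…,n} → {0,…,n} by S(0) = 0, S(y_{i,j}) = y_{i,j+1} for y_{i,j} > 0 and j < n, and S(y_{i,n}) = 0. Then S is well-defined, the restriction S⁺ of S to the set where S is positive is a strictly increasing bijection onto its range, and the value 1 occurs in the first column of Y. -/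
/-!
Since the entries of `Y` are distinct, `S` is well defined, and condition (iii) says precisely
that `S` is strictly increasing where it is positive.

For the second claim, suppose `1` sits in column `j ≥ 2` of row `i`, right after `w > 0`.
Condition (ii) exhibits `p_B` last entries, lying in distinct nonzero rows; as there are only
`p_B` nonzero rows, these are all the last entries, so the last entries are exactly the values
exceeding `n - p_B`. A successor of `1` in row `i` would be larger than `1`, and then (iii) would
force `w < 1`; hence `1` ends its row and `n - p_B = 0`. But `w` does not end its row, so
`w ≤ n - p_B = 0`.
-/

open Finset

namespace NumberedYoungDiagram

variable {m : ℕ} (Y : Fin m → ℕ → ℕ)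

def EntriesDistinct : Prop :=
  ∀ ⦃i i' : Fin m⦄ ⦃j j' : ℕ⦄, 1 ≤ j → 1 ≤ j' → 0 < Y i j → Y i j = Y i' j' → i = i' ∧ j = j'

def RowsLeftAligned : Prop :=
  ∀ i j, 1 ≤ j → 0 < Y i (j + 1) → 0 < Y i j

def IsLastEntry (v : ℕ) : Prop :=
  ∃ i j, 1 ≤ j ∧ Y i j = v ∧ Y i (j + 1) = 0

open Classical in
noncomputable def successor (v : ℕ) : ℕ :=
  if h : ∃ p : Fin m × ℕ, 1 ≤ p.2 ∧ 0 < v ∧ Y p.1 p.2 = v then Y h.choose.1 (h.choose.2 + 1)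
  else 0

variable {Y}

theorem entriesDistinct_of_existsUnique {n : ℕ} (hYle : ∀ i j, Y i j ≤ n)
    (hYout : ∀ i j, n < j → Y i j = 0)
    (hYnum : ∀ v, 1 ≤ v → v ≤ n → ∃! p : Fin m × ℕ, 1 ≤ p.2 ∧ p.2 ≤ n ∧ Y p.1 p.2 = v) :
    EntriesDistinct Y := by
  intro i i' j j' hj hj' hpos heq
  have hjn : j ≤ n := by
    by_contra h
    exact hpos.ne' (hYout i j (by omega))
  have hj'n : j' ≤ n := by
    by_contra h
    exact hpos.ne' (heq.trans (hYout i' j' (by omega)))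
  have := (hYnum _ hpos (hYle i j)).unique (y₁ := (i, j)) (y₂ := (i', j'))
    ⟨hj, hjn, rfl⟩ ⟨hj', hj'n, heq.symm⟩
  simpa [Prod.ext_iff] using this

@[simp]
theorem successor_zero : successor Y 0 = 0 := by
  simp [successor]

theorem successor_apply (hY : EntriesDistinct Y) {i : Fin m} {j : ℕ} (hj : 1 ≤ j)
    (hpos : 0 < Y i j) : successor Y (Y i j) = Y i (j + 1) := by
  have hex : ∃ p : Fin m × ℕ, 1 ≤ p.2 ∧ 0 < Y i j ∧ Y p.1 p.2 = Y i j := ⟨(i, j), hj, hpos, rfl⟩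
  obtain ⟨hj', -, heq⟩ := hex.choose_spec
  obtain ⟨hi, hj⟩ := hY hj' hj (heq.symm ▸ hpos) heq
  rw [successor, dif_pos hex, hi, hj]

theorem exists_of_successor_pos {v : ℕ} (h : 0 < successor Y v) :
    ∃ i j, 1 ≤ j ∧ 0 < Y i j ∧ Y i j = v := by
  unfold successor at h
  split_ifs at h with hex
  · obtain ⟨hj, hv, heq⟩ := hex.choose_spec
    exact ⟨_, _, hj, heq.symm ▸ hv, heq⟩
  · exact absurd h (lt_irrefl 0)

theorem successor_strictMonoOn (hY : EntriesDistinct Y)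
    (hiii : ∀ i i' j j', 1 ≤ j → 1 ≤ j' →
      Y i' (j' + 1) < Y i (j + 1) → 0 < Y i' (j' + 1) → Y i' j' < Y i j) :
    StrictMonoOn (successor Y) {k | 0 < successor Y k} := by
  intro k hk k' hk' hlt
  obtain ⟨i, j, hj, hpos, rfl⟩ := exists_of_successor_pos hk
  obtain ⟨i', j', hj', hpos', rfl⟩ := exists_of_successor_pos hk'
  simp only [Set.mem_ofPred_eq, successor_apply hY hj hpos, successor_apply hY hj' hpos']
    at hk hk' ⊢
  rcases lt_trichotomy (Y i (j + 1)) (Y i' (j' + 1)) with h | h | h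
  · exact h
  · obtain ⟨rfl, hjj⟩ := hY (by omega) (by omega) hk h
    obtain rfl : j = j' := by omega
    exact absurd hlt (lt_irrefl _)
  · exact absurd (hiii i i' j j' hj hj' h hk') hlt.not_gt

theorem pos_of_pos_of_le (hi : RowsLeftAligned Y) {i : Fin m} {j j' : ℕ} (hj : 1 ≤ j)
    (hle : j ≤ j') (hpos : 0 < Y i j') : 0 < Y i j := by
  induction j', hle using Nat.le_induction with
  | base => exact hpos
  | succ k hjk ih => exact ih (hi i k (hj.trans hjk) hpos)

theorem le_of_eq_zero_of_pos (hi : RowsLeftAligned Y) {i : Fin m} {j j' : ℕ}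
    (hzero : Y i (j + 1) = 0) (hpos : 0 < Y i j') : j' ≤ j := by
  by_contra h
  exact (pos_of_pos_of_le hi (Nat.le_add_left 1 j) (by omega) hpos).ne' hzero

open Classical in
theorem card_lastEntries_le (hi : RowsLeftAligned Y) (n : ℕ) :
    #{v ∈ Icc 1 n | IsLastEntry Y v} ≤ #{i | Y i 1 ≠ 0} := by
  refine card_le_card_of_forall_subsingleton
    (fun v i => ∃ j, 1 ≤ j ∧ Y i j = v ∧ Y i (j + 1) = 0) ?_ ?_
  · intro v hv
    obtain ⟨hv, i, j, hj, hij, hzero⟩ := mem_filter.1 hv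
    have hrow : 0 < Y i 1 := pos_of_pos_of_le hi le_rfl hj (hij ▸ (mem_Icc.1 hv).1)
    exact ⟨i, mem_filter.2 ⟨mem_univ i, hrow.ne'⟩, j, hj, hij, hzero⟩
  · rintro i - v ⟨hv, j, -, rfl, hzero⟩ v' ⟨hv', j', -, rfl, hzero'⟩
    have hpos : 1 ≤ Y i j := (mem_Icc.1 (mem_filter.1 hv).1).1
    have hpos' : 1 ≤ Y i j' := (mem_Icc.1 (mem_filter.1 hv').1).1
    rw [(le_of_eq_zero_of_pos hi hzero' hpos).antisymm (le_of_eq_zero_of_pos hi hzero hpos')]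

open Classical in
theorem lastEntries_eq_Icc (hi : RowsLeftAligned Y) {n : ℕ}
    (hlast : ∀ v ∈ Icc (n - #{i | Y i 1 ≠ 0} + 1) n, IsLastEntry Y v) :
    {v ∈ Icc 1 n | IsLastEntry Y v} = Icc (n - #{i | Y i 1 ≠ 0} + 1) n := by
  symm
  refine eq_of_subset_of_card_le
    (fun v hv => mem_filter.2 ⟨Icc_subset_Icc (by omega) le_rfl hv, hlast v hv⟩) ?_
  have hrows := card_lastEntries_le hi n
  have hvalues : #{v ∈ Icc 1 n | IsLastEntry Y v} ≤ #(Icc 1 n) := card_filter_le _ _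
  rw [Nat.card_Icc] at hvalues ⊢
  omega

theorem le_sub_of_pos_succ (hY : EntriesDistinct Y) {n p : ℕ}
    (hlast : ∀ v ∈ Icc (n - p + 1) n, IsLastEntry Y v) {i : Fin m} {j : ℕ} (hj : 1 ≤ j)
    (hpos : 0 < Y i j) (hle : Y i j ≤ n) (hsucc : 0 < Y i (j + 1)) : Y i j ≤ n - p := by
  by_contra h
  obtain ⟨a, b, hb, hab, hzero⟩ := hlast _ (mem_Icc.2 ⟨by omega, hle⟩)
  obtain ⟨rfl, rfl⟩ := hY hb hj (hab.symm ▸ hpos) hab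
  exact hsucc.ne' hzero

open Classical in
theorem exists_eq_one_in_first_column (hY : EntriesDistinct Y) (hi : RowsLeftAligned Y) {n : ℕ}
    (hYle : ∀ i j, Y i j ≤ n)
    (hlast : ∀ v ∈ Icc (n - #{i | Y i 1 ≠ 0} + 1) n, IsLastEntry Y v)
    (hiii : ∀ i i' j j', 1 ≤ j → 1 ≤ j' →
      Y i' (j' + 1) < Y i (j + 1) → 0 < Y i' (j' + 1) → Y i' j' < Y i j)
    {i : Fin m} {j : ℕ} (hj : 1 ≤ j) (hone : Y i j = 1) : ∃ i, Y i 1 = 1 := by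
  refine ⟨i, ?_⟩
  by_contra hne
  obtain ⟨k, rfl⟩ : ∃ k, j = k + 1 := ⟨j - 1, by omega⟩
  have hk : 1 ≤ k := by
    by_contra h
    obtain rfl : k = 0 := by omega
    exact hne hone
  have hw : 0 < Y i k := hi i k hk (by omega)
  have hend : Y i (k + 1 + 1) = 0 := by
    by_contra hsucc
    have hgt : Y i (k + 1) < Y i (k + 1 + 1) := by
      refine lt_of_le_of_ne (by omega) fun h => ?_
      have := (hY (by omega) (by omega) (by omega) h).2
      omega
    have := hiii i i (k + 1) k (by omega) hk hgt (by omega)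
    omega
  have hone_last : n - #{i | Y i 1 ≠ 0} < 1 := by
    have hmem : 1 ∈ {v ∈ Icc 1 n | IsLastEntry Y v} :=
      mem_filter.2 ⟨mem_Icc.2 ⟨le_rfl, hone ▸ hYle i (k + 1)⟩, i, k + 1, hj, hone, hend⟩
    rw [lastEntries_eq_Icc hi hlast, mem_Icc] at hmem
    omega
  have := le_sub_of_pos_succ hY hlast hk hw (hYle i k) (by omega)
  omega

end NumberedYoungDiagram

open NumberedYoungDiagram

/-- For an admissible numbered Young diagram `Y`, the successor map `S` defined by
`S(0) = 0`, `S(y_{i,j}) = y_{i,j+1}` is well defined, its restriction to the set where it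
is positive is strictly increasing (hence a bijection onto its range), and the value `1`
occurs in the first column of `Y`. -/
theorem stmt8 (m n : ℕ) (hn : 0 < n)
    (Y : Fin m → ℕ → ℕ)
    (hYle : ∀ i j, Y i j ≤ n)
    (hYout : ∀ (i : Fin m) (j : ℕ), (j = 0 ∨ n < j) → Y i j = 0)
    -- each of `1, …, n` occurs exactly once
    (hYnum : ∀ v, 1 ≤ v → v ≤ n →
      ∃! p : Fin m × ℕ, 1 ≤ p.2 ∧ p.2 ≤ n ∧ Y p.1 p.2 = v)
    (pB : ℕ) (hpB : pB = (Finset.univ.filter (fun i : Fin m => Y i 1 ≠ 0)).card)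
    -- (i) rows are left-aligned
    (hi : ∀ (i : Fin m) (j : ℕ), 1 ≤ j → 0 < Y i (j + 1) → 0 < Y i j)
    -- (ii) the values `n - p_B + 1, …, n` occur as last nonzero entries of rows
    (hii : ∀ v, n - pB + 1 ≤ v → v ≤ n →
      ∃ (i : Fin m) (j : ℕ), 1 ≤ j ∧ j ≤ n ∧ Y i j = v ∧ ∀ j', j < j' → Y i j' = 0)
    -- (iii)
    (hiii : ∀ (i i' : Fin m) (j j' : ℕ), 1 ≤ j → 1 ≤ j' →
      Y i' (j' + 1) < Y i (j + 1) → 0 < Y i' (j' + 1) →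
      (0 < Y i' j' ∧ Y i' j' < Y i j)) :
    (∃ S : ℕ → ℕ, S 0 = 0 ∧
      (∀ (i : Fin m) (j : ℕ), 1 ≤ j → 0 < Y i j → S (Y i j) = Y i (j + 1)) ∧
      (∀ k k' : ℕ, 0 < S k → 0 < S k' → k < k' → S k < S k')) ∧
    (∃ i : Fin m, Y i 1 = 1) := by
  have hY := entriesDistinct_of_existsUnique hYle
    (fun i j h => hYout i j (Or.inr h)) hYnum
  have hiii' := fun i i' j j' hj hj' hlt hpos => (hiii i i' j j' hj hj' hlt hpos).2
  have hlast : ∀ v ∈ Icc (n - pB + 1) n, IsLastEntry Y v := by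
    intro v hv
    obtain ⟨i, j, hj, -, hij, hzero⟩ := hii v (mem_Icc.1 hv).1 (mem_Icc.1 hv).2
    exact ⟨i, j, hj, hij, hzero _ j.lt_succ_self⟩
  subst hpB
  obtain ⟨⟨i, j⟩, ⟨hj, -, hone⟩, -⟩ := hYnum 1 le_rfl hn
  refine ⟨⟨successor Y, successor_zero,
    fun i j hj hpos => successor_apply hY hj hpos,
    fun k k' hk hk' => successor_strictMonoOn hY hiii' hk hk'⟩,
    exists_eq_one_in_first_column hY hi hYle hlast hiii' hj hone⟩
end

section
/- Let Z be an m×n Young diagram (left-aligned binary array) with dynamical indices d = (d₁,…,d_m), dᵢ = number of ones in row i, ∑dᵢ = n. Then the number of admissible numbered Young diagrams Y with the same left-aligned support pattern as Z equals p_B!, where p_B is the number of indices i with dᵢ > 0. -/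
/-
Put the rows of the diagram right-aligned on top of each other. Condition (iii) transports a
comparison between two entries one column to the left, and by (ii) the row ends carry the
`p_B` largest values; by induction on the distance from the right edge, an admissible numbering
is therefore decreasing along the order "column from the right, then rank of the row end".
Being a bijection onto `1, …, n`, it is determined by this order, i.e. by the ranking of its
`p_B` row ends. Conversely, numbering the cells from `n` downwards along this order, for any
ranking of the nonzero rows, gives an admissible numbering. So admissible numberings correspond
to bijections from the nonzero rows to `Fin p_B`.
-/
open Finset

section BijOn

variable {α β : Type*}

lemma bijOn_of_existsUnique {s : Finset α} {t : Finset β} {f : α → β}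
    (h : ∀ v ∈ t, ∃! p, p ∈ s ∧ f p = v) (hcard : #s ≤ #t) : Set.BijOn f s t := by
  choose g hg huniq using h
  have hmaps : Set.MapsTo f s t := by
    intro p hp
    obtain ⟨v, hv, rfl⟩ := surj_on_of_inj_on_of_card_le g (fun v hv => (hg v hv).1)
      (fun v w hv hw hvw => (hg v hv).2.symm.trans (hvw ▸ (hg w hw).2)) hcard p hp
    simpa [(hg v hv).2] using hv
  refine ⟨hmaps, fun p hp q hq hpq => ?_, fun v hv => ⟨g v hv, (hg v hv).1, (hg v hv).2⟩⟩
  exact (huniq _ (hmaps hp) p ⟨hp, rfl⟩).trans (huniq _ (hmaps hp) q ⟨hq, hpq.symm⟩).symm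

lemma existsUnique_of_bijOn {s : Set α} {t : Set β} {f : α → β} (hf : Set.BijOn f s t)
    {v : β} (hv : v ∈ t) : ∃! p, p ∈ s ∧ f p = v := by
  obtain ⟨p, hp, hpv⟩ := hf.surjOn hv
  exact ⟨p, ⟨hp, hpv⟩, fun q ⟨hq, hqv⟩ => hf.injOn hq hp (hqv.trans hpv.symm)⟩

end BijOn

section KeyRank

variable {α β : Type*} [LinearOrder β]

def keyRank (s : Finset α) (κ : α → β) (c : α) : ℕ := #{x ∈ s | κ x < κ c}

variable {s : Finset α} {κ : α → β}

lemma keyRank_lt_card {c : α} (hc : c ∈ s) : keyRank s κ c < #s :=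
  card_lt_card <| filter_ssubset.mpr ⟨c, hc, lt_irrefl _⟩

lemma keyRank_lt_keyRank_iff {c c' : α} (hc : c ∈ s) :
    keyRank s κ c < keyRank s κ c' ↔ κ c < κ c' := by
  constructor
  · intro h
    by_contra! hle
    refine h.not_ge <| card_le_card fun x => ?_
    simp only [mem_filter]
    exact fun ⟨hx, hlt⟩ => ⟨hx, hlt.trans_le hle⟩
  · intro h
    refine card_lt_card <| (ssubset_iff_of_subset fun x => ?_).mpr ⟨c, ?_, ?_⟩
    · simp only [mem_filter]
      exact fun ⟨hx, hlt⟩ => ⟨hx, hlt.trans h⟩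
    · simpa [hc] using h
    · simp

lemma bijOn_card_sub_keyRank (hκ : Set.InjOn κ s) :
    Set.BijOn (fun c => #s - keyRank s κ c) s (Icc 1 #s) := by
  have hmaps : Set.MapsTo (fun c => #s - keyRank s κ c) s (Icc 1 #s) := fun c hc => by
    have := keyRank_lt_card (κ := κ) hc
    simp only [coe_Icc, Set.mem_Icc]
    omega
  have hinj : Set.InjOn (fun c => #s - keyRank s κ c) s := by
    intro c hc c' hc' h
    have := keyRank_lt_card (κ := κ) hc
    have := keyRank_lt_card (κ := κ) hc'
    rcases lt_trichotomy (κ c) (κ c') with hlt | heq | hgt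
    · have := (keyRank_lt_keyRank_iff hc).mpr hlt
      simp only at h
      omega
    · exact hκ hc hc' heq
    · have := (keyRank_lt_keyRank_iff hc').mpr hgt
      simp only at h
      omega
  exact ⟨hmaps, hinj, surjOn_of_injOn_of_card_le _ hmaps hinj (by simp)⟩

lemma eq_card_sub_keyRank {f : α → ℕ} (hf : Set.BijOn f s (Icc 1 #s)) (hκ : Set.InjOn κ s)
    (hanti : ∀ c ∈ s, ∀ c' ∈ s, κ c < κ c' → f c' < f c) {c : α} (hc : c ∈ s) :
    f c = #s - keyRank s κ c := by
  have hrank : {x ∈ s | κ x < κ c} = {x ∈ s | f c < f x} := by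
    refine filter_congr fun x hx => ⟨hanti x hx c hc, fun h => ?_⟩
    rcases lt_trichotomy (κ x) (κ c) with hlt | heq | hgt
    · exact hlt
    · exact absurd (hκ hx hc heq ▸ h) (lt_irrefl _)
    · exact absurd (hanti c hc x hx hgt) h.not_gt
  have himage : {x ∈ s | f c < f x}.image f = Ioc (f c) #s := by
    rw [← filter_image, (image_eq_iff_bijOn_of_card (by simp)).mpr hf]
    ext v
    simp only [mem_filter, mem_Icc, mem_Ioc]
    omega
  have hle : f c ≤ #s := (mem_Icc.mp (hf.mapsTo hc)).2
  have hcard : #{x ∈ s | f c < f x} = #s - f c := by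
    rw [← card_image_of_injOn (hf.injOn.mono (coe_subset.mpr (filter_subset _ _))), himage,
      Nat.card_Ioc]
  rw [keyRank, hrank, hcard]
  omega

end KeyRank

namespace NumberedYoungDiagram

variable {ι : Type*}

def IsAdmissible (d : ι → ℕ) (n pB : ℕ) (Y : ι → ℕ → ℕ) : Prop :=
  (∀ (i : ι) (j : ℕ), Y i j ≠ 0 ↔ (1 ≤ j ∧ j ≤ d i)) ∧
  (∀ v, 1 ≤ v → v ≤ n → ∃! p : ι × ℕ, 1 ≤ p.2 ∧ p.2 ≤ d p.1 ∧ Y p.1 p.2 = v) ∧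
  (∀ v, n - pB + 1 ≤ v → v ≤ n →
    ∃ (i : ι) (j : ℕ), 1 ≤ j ∧ j ≤ n ∧ Y i j = v ∧ ∀ j', j < j' → Y i j' = 0) ∧
  (∀ (i i' : ι) (j j' : ℕ), 1 ≤ j → 1 ≤ j' →
    Y i' (j' + 1) < Y i (j + 1) → 0 < Y i' (j' + 1) → (0 < Y i' j' ∧ Y i' j' < Y i j))

/-- With the rows right-aligned, `d i - j` is the column of the cell `(i, j)` counted from the
right edge; ties within a column are broken by the row rank `rk`. -/
def key (d rk : ι → ℕ) (p : ι × ℕ) : ℕ ×ₗ ℕ := toLex (d p.1 - p.2, rk p.1)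

lemma key_lt_key_iff_succ {d rk : ι → ℕ} {i i' : ι} {j j' : ℕ} (h : j + 1 ≤ d i)
    (h' : j' + 1 ≤ d i') :
    key d rk (i, j) < key d rk (i', j') ↔ key d rk (i, j + 1) < key d rk (i', j' + 1) := by
  simp only [key, Prod.Lex.toLex_lt_toLex]
  omega

lemma key_lt_key_end_iff {d rk : ι → ℕ} {p : ι × ℕ} {i : ι} :
    key d rk p < key d rk (i, d i) ↔ d p.1 ≤ p.2 ∧ rk p.1 < rk i := by
  simp [key, Prod.Lex.toLex_lt_toLex, Nat.sub_eq_zero_iff_le]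

/-- The value on empty rows is irrelevant. -/
def rowRank {d : ι → ℕ} {pB : ℕ} (e : {i // 0 < d i} ≃ Fin pB) (i : ι) : ℕ :=
  if h : 0 < d i then e ⟨i, h⟩ else 0

lemma rowRank_of_pos {d : ι → ℕ} {pB : ℕ} (e : {i // 0 < d i} ≃ Fin pB) {i : ι} (hi : 0 < d i) :
    rowRank e i = e ⟨i, hi⟩ :=
  dif_pos hi

variable [Fintype ι]

def rows (d : ι → ℕ) : Finset ι := {i | 0 < d i}

lemma mem_rows {d : ι → ℕ} {i : ι} : i ∈ rows d ↔ 0 < d i := by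
  simp [rows]

lemma card_rows_le (d : ι → ℕ) : #(rows d) ≤ ∑ i, d i :=
  calc #(rows d) = ∑ _ ∈ rows d, 1 := card_eq_sum_ones _
    _ ≤ ∑ i ∈ rows d, d i := sum_le_sum fun _ hi => mem_rows.mp hi
    _ ≤ ∑ i, d i := sum_le_sum_of_subset (subset_univ _)

section RowRank

variable {d : ι → ℕ} {pB : ℕ} (e : {i // 0 < d i} ≃ Fin pB)

lemma rowRank_injOn : Set.InjOn (rowRank e) (rows d) := by
  intro i hi i' hi' h
  rw [mem_coe, mem_rows] at hi hi'
  rw [rowRank_of_pos e hi, rowRank_of_pos e hi'] at h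
  exact congrArg Subtype.val (e.injective (Fin.ext h))

lemma card_rowRank_lt (k : ℕ) : #{i ∈ rows d | rowRank e i < k} = min pB k := by
  rw [← Fin.card_filter_val_lt]
  symm
  refine card_nbij (fun y => (e.symm y).1) ?_ ?_ ?_
  · intro y hy
    have hpos := (e.symm y).2
    rw [mem_coe, mem_filter] at hy
    rw [mem_coe, mem_filter, mem_rows]
    rw [rowRank_of_pos e hpos]
    simpa [hpos] using hy
  · intro y _ y' _ h
    exact e.symm.injective (Subtype.ext h)
  · intro i hi
    rw [mem_coe, mem_filter, mem_rows] at hi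
    refine ⟨e ⟨i, hi.1⟩, ?_, by simp⟩
    simpa [← rowRank_of_pos e hi.1] using hi.2

end RowRank

variable [DecidableEq ι]

def cells (d : ι → ℕ) : Finset (ι × ℕ) := univ.biUnion fun i => {i} ×ˢ Icc 1 (d i)

lemma mem_cells {d : ι → ℕ} {p : ι × ℕ} : p ∈ cells d ↔ 1 ≤ p.2 ∧ p.2 ≤ d p.1 := by
  obtain ⟨i, j⟩ := p
  simp [cells]

lemma mk_mem_cells {d : ι → ℕ} {i : ι} {j : ℕ} : (i, j) ∈ cells d ↔ 1 ≤ j ∧ j ≤ d i :=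
  mem_cells

lemma end_mem_cells {d : ι → ℕ} {i : ι} (hi : 0 < d i) : (i, d i) ∈ cells d :=
  mk_mem_cells.mpr ⟨hi, le_rfl⟩

lemma card_cells (d : ι → ℕ) : #(cells d) = ∑ i, d i := by
  rw [cells, card_biUnion]
  · simp
  · intro i _ i' _ hii'
    simp only [Function.onFun, disjoint_left, mem_product, mem_singleton]
    exact fun p hp hp' => hii' (hp.1.symm.trans hp'.1)

lemma key_injOn {d rk : ι → ℕ} (hrk : Set.InjOn rk (rows d)) :
    Set.InjOn (key d rk) (cells d) := by
  intro p hp q hq h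
  rw [mem_coe, mem_cells] at hp hq
  simp only [key, toLex_inj, Prod.mk.injEq] at h
  have hpq : p.1 = q.1 := hrk (mem_rows.mpr (by omega)) (mem_rows.mpr (by omega)) h.2
  exact Prod.ext hpq (by rw [hpq] at h hp; omega)

lemma keyRank_end (d rk : ι → ℕ) (i : ι) :
    keyRank (cells d) (key d rk) (i, d i) = #{i' ∈ rows d | rk i' < rk i} := by
  refine card_nbij' Prod.fst (fun i' => (i', d i')) ?_ ?_ ?_ fun _ _ => rfl
  · intro p hp
    rw [mem_coe, mem_filter, mem_cells, key_lt_key_end_iff] at hp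
    rw [mem_coe, mem_filter, mem_rows]
    omega
  · intro i' hi'
    rw [mem_coe, mem_filter, mem_rows] at hi'
    simp only [mem_coe, mem_filter, mk_mem_cells, key_lt_key_end_iff]
    omega
  · intro p hp
    rw [mem_coe, mem_filter, mem_cells, key_lt_key_end_iff] at hp
    exact Prod.ext rfl (by dsimp only; omega)

def stacking (d rk : ι → ℕ) (i : ι) (j : ℕ) : ℕ :=
  if (i, j) ∈ cells d then #(cells d) - keyRank (cells d) (key d rk) (i, j) else 0

section Stacking

variable {d : ι → ℕ} {rk : ι → ℕ}

lemma stacking_of_mem {p : ι × ℕ} (hp : p ∈ cells d) :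
    stacking d rk p.1 p.2 = #(cells d) - keyRank (cells d) (key d rk) p := by
  simp [stacking, hp]

lemma stacking_ne_zero_iff {i : ι} {j : ℕ} : stacking d rk i j ≠ 0 ↔ 1 ≤ j ∧ j ≤ d i := by
  rw [← mem_cells (p := (i, j))]
  by_cases h : (i, j) ∈ cells d
  · have := keyRank_lt_card (κ := key d rk) h
    simp only [stacking, h, if_true, iff_true]
    omega
  · simp [stacking, h]

lemma stacking_lt_stacking_iff {p q : ι × ℕ} (hp : p ∈ cells d) (hq : q ∈ cells d) :
    stacking d rk q.1 q.2 < stacking d rk p.1 p.2 ↔ key d rk p < key d rk q := by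
  have := keyRank_lt_card (κ := key d rk) hp
  have := keyRank_lt_card (κ := key d rk) hq
  rw [stacking_of_mem hp, stacking_of_mem hq, ← keyRank_lt_keyRank_iff hp]
  omega

lemma bijOn_stacking (hrk : Set.InjOn rk (rows d)) :
    Set.BijOn (fun p : ι × ℕ => stacking d rk p.1 p.2) (cells d) (Icc 1 #(cells d)) :=
  (bijOn_card_sub_keyRank (key_injOn hrk)).congr fun _ hp => (stacking_of_mem hp).symm

lemma stacking_end (i : ι) (hi : 0 < d i) :
    stacking d rk i (d i) = #(cells d) - #{i' ∈ rows d | rk i' < rk i} := by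
  rw [stacking_of_mem (p := (i, d i)) (end_mem_cells hi), keyRank_end]

lemma stacking_lt_of_succ_lt {i i' : ι} {j j' : ℕ} (hj : 1 ≤ j) (hj' : 1 ≤ j')
    (hlt : stacking d rk i' (j' + 1) < stacking d rk i (j + 1))
    (hpos : 0 < stacking d rk i' (j' + 1)) :
    0 < stacking d rk i' j' ∧ stacking d rk i' j' < stacking d rk i j := by
  have hcell' := stacking_ne_zero_iff.mp hpos.ne'
  have hcell := stacking_ne_zero_iff.mp (hpos.trans hlt).ne'
  refine ⟨Nat.pos_of_ne_zero (stacking_ne_zero_iff.mpr ⟨hj', by omega⟩), ?_⟩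
  rw [stacking_lt_stacking_iff (mk_mem_cells.mpr ⟨hj, by omega⟩)
    (mk_mem_cells.mpr ⟨hj', by omega⟩), key_lt_key_iff_succ (by omega) (by omega)]
  exact (stacking_lt_stacking_iff (mk_mem_cells.mpr ⟨by omega, hcell.2⟩)
    (mk_mem_cells.mpr ⟨by omega, hcell'.2⟩)).mp hlt

end Stacking

section StackingByRowRank

variable {d : ι → ℕ} {pB : ℕ} (e : {i // 0 < d i} ≃ Fin pB)

lemma stacking_rowRank_end {n : ℕ} (hd : ∑ i, d i = n) (x : {i // 0 < d i}) :
    stacking d (rowRank e) x (d x) = n - e x := by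
  rw [stacking_end _ x.2, card_cells, hd, card_rowRank_lt, rowRank_of_pos e x.2]
  simp

lemma isAdmissible_stacking {n : ℕ} (hd : ∑ i, d i = n) :
    IsAdmissible d n pB (stacking d (rowRank e)) := by
  have hcard : #(cells d) = n := (card_cells d).trans hd
  refine ⟨fun i j => stacking_ne_zero_iff, fun v hv₁ hv₂ => ?_, fun v hv₁ hv₂ => ?_,
    fun i i' j j' hj hj' => stacking_lt_of_succ_lt hj hj'⟩
  · have := existsUnique_of_bijOn (bijOn_stacking (rowRank_injOn e))
      (v := v) (by rw [mem_coe, mem_Icc, hcard]; exact ⟨hv₁, hv₂⟩)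
    simpa [mem_cells, and_assoc] using this
  · have hpBn : pB ≤ n := by
      rw [← hd, ← Fintype.card_fin pB, ← Fintype.card_congr e, Fintype.card_subtype]
      exact card_rows_le d
    set x := e.symm ⟨n - v, by omega⟩
    refine ⟨x, d x, x.2, hd ▸ single_le_sum (fun _ _ => Nat.zero_le _) (mem_univ _), ?_, ?_⟩
    · rw [stacking_rowRank_end e hd, Equiv.apply_symm_apply, Fin.val_mk]
      omega
    · intro j' hj'
      by_contra h
      have := stacking_ne_zero_iff.mp h
      omega
end StackingByRowRank

namespace IsAdmissible

variable {d : ι → ℕ} {n pB : ℕ} {Y : ι → ℕ → ℕ}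

lemma bijOn (hY : IsAdmissible d n pB Y) (hd : ∑ i, d i = n) :
    Set.BijOn (fun p : ι × ℕ => Y p.1 p.2) (cells d) (Icc 1 n) := by
  refine bijOn_of_existsUnique (fun v hv => ?_) (by rw [card_cells, hd, Nat.card_Icc]; omega)
  simpa [mem_cells, and_assoc] using hY.2.1 v (mem_Icc.mp hv).1 (mem_Icc.mp hv).2

lemma le_of_mem (hY : IsAdmissible d n pB Y) (hd : ∑ i, d i = n) {p : ι × ℕ}
    (hp : p ∈ cells d) : Y p.1 p.2 ≤ n :=
  (mem_Icc.mp ((hY.bijOn hd).mapsTo hp)).2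

omit [Fintype ι] [DecidableEq ι] in
lemma exists_end_eq (hY : IsAdmissible d n pB Y) {v : ℕ} (hv₁ : n - pB < v) (hv₂ : v ≤ n) :
    ∃ i, 0 < d i ∧ Y i (d i) = v := by
  obtain ⟨i, j, hj, -, hYv, hzero⟩ := hY.2.2.1 v (by omega) hv₂
  have hcell := (hY.1 i j).mp (by omega)
  have hjd : j = d i := by
    by_contra hne
    exact (hY.1 i (d i)).mpr ⟨by omega, le_rfl⟩ (hzero _ (by omega))
  exact ⟨i, by omega, hjd ▸ hYv⟩

lemma snd_eq_of_sub_lt (hY : IsAdmissible d n pB Y) (hd : ∑ i, d i = n) {p : ι × ℕ}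
    (hp : p ∈ cells d) (h : n - pB < Y p.1 p.2) : p.2 = d p.1 := by
  obtain ⟨i, hi, hYi⟩ := hY.exists_end_eq h (hY.le_of_mem hd hp)
  rw [← (hY.bijOn hd).injOn (end_mem_cells hi) hp hYi]

lemma sub_lt_of_pos (hY : IsAdmissible d n pB Y) (hd : ∑ i, d i = n) (hpB : pB = #(rows d))
    {i : ι} (hi : 0 < d i) : n - pB < Y i (d i) := by
  set ends := (rows d).image fun i => (i, d i)
  have hends : ∀ p ∈ ends, p ∈ cells d := by
    simp only [ends, mem_image, mem_rows]
    rintro _ ⟨i, hi, rfl⟩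
    exact end_mem_cells hi
  have hcard : #ends ≤ #(Icc (n - pB + 1) n) := by
    have := card_rows_le d
    rw [Nat.card_Icc]
    exact card_image_le.trans (by omega)
  have hbij : Set.BijOn (fun p : ι × ℕ => Y p.1 p.2) ends (Icc (n - pB + 1) n) := by
    refine bijOn_of_existsUnique (fun v hv => ?_) hcard
    rw [mem_Icc] at hv
    obtain ⟨i', hi', hYi'⟩ := hY.exists_end_eq (v := v) (by omega) hv.2
    have hmem : (i', d i') ∈ ends := mem_image_of_mem _ (mem_rows.mpr hi')
    exact ⟨(i', d i'), ⟨hmem, hYi'⟩, fun q ⟨hq, hqv⟩ =>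
      (hY.bijOn hd).injOn (hends q hq) (hends _ hmem) (hqv.trans hYi'.symm)⟩
  have := hbij.mapsTo (mem_image_of_mem _ (mem_rows.mpr hi))
  simp only [coe_Icc, Set.mem_Icc] at this
  omega

lemma injOn_end (hY : IsAdmissible d n pB Y) (hd : ∑ i, d i = n) :
    Set.InjOn (fun i => Y i (d i)) (rows d) := fun _ hi _ hi' h =>
  congrArg Prod.fst <| (hY.bijOn hd).injOn (end_mem_cells (mem_rows.mp hi))
    (end_mem_cells (mem_rows.mp hi')) h

section RankedByEnds

variable (hY : IsAdmissible d n pB Y) (hd : ∑ i, d i = n) (hpB : pB = #(rows d))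
  {rk : ι → ℕ} (hrk : ∀ i, 0 < d i → rk i = n - Y i (d i))
include hY hd hpB hrk

lemma lt_of_key_lt {p q : ι × ℕ} (hp : p ∈ cells d) (hq : q ∈ cells d)
    (h : key d rk p < key d rk q) : Y q.1 q.2 < Y p.1 p.2 := by
  obtain ⟨i, j⟩ := p
  obtain ⟨i', j'⟩ := q
  rw [mk_mem_cells] at hp hq
  dsimp only
  obtain ⟨t, ht⟩ : ∃ t, d i - j = t := ⟨_, rfl⟩
  induction t generalizing j i' j' with
  | zero =>
    have hYi : Y i j ≤ n := hY.le_of_mem hd (mk_mem_cells.mpr hp)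
    have hYq : Y i' j' ≤ n := hY.le_of_mem hd (mk_mem_cells.mpr hq)
    obtain rfl : j = d i := by omega
    have hend := hY.sub_lt_of_pos hd hpB (i := i) (by omega)
    simp only [key, Prod.Lex.toLex_lt_toLex] at h
    rcases h with hdist | ⟨hdist, hrk'⟩
    · have : Y i' j' ≤ n - pB := not_lt.mp fun hlt =>
        absurd (hY.snd_eq_of_sub_lt hd (mk_mem_cells.mpr hq) hlt) (by dsimp only; omega)
      omega
    · obtain rfl : j' = d i' := by omega
      rw [hrk i (by omega), hrk i' (by omega)] at hrk'
      omega
  | succ t ih =>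
    have hj'd : j' + 1 ≤ d i' := by
      have hkey := h
      simp only [key, Prod.Lex.toLex_lt_toLex] at hkey
      omega
    have hlt : Y i' (j' + 1) < Y i (j + 1) :=
      ih (j + 1) ⟨by omega, by omega⟩ i' (j' + 1) ⟨by omega, hj'd⟩
        ((key_lt_key_iff_succ (by omega) hj'd).mp h) (by omega)
    have hpos : 0 < Y i' (j' + 1) := Nat.pos_of_ne_zero ((hY.1 _ _).mpr ⟨by omega, hj'd⟩)
    exact (hY.2.2.2 i i' j j' hp.1 hq.1 hlt hpos).2

lemma eq_stacking : Y = stacking d rk := by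
  have hrk_inj : Set.InjOn rk (rows d) := by
    intro i hi i' hi' h
    have : Y i (d i) ≤ n := hY.le_of_mem hd (end_mem_cells (mem_rows.mp hi))
    have : Y i' (d i') ≤ n := hY.le_of_mem hd (end_mem_cells (mem_rows.mp hi'))
    rw [hrk i (mem_rows.mp hi), hrk i' (mem_rows.mp hi')] at h
    exact hY.injOn_end hd hi hi' (show Y i (d i) = Y i' (d i') by omega)
  have hbij := hY.bijOn hd
  rw [← hd, ← card_cells] at hbij
  funext i j
  by_cases hij : (i, j) ∈ cells d
  · rw [stacking_of_mem (p := (i, j)) hij]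
    exact eq_card_sub_keyRank hbij (key_injOn hrk_inj)
      (fun p hp q hq => hY.lt_of_key_lt hd hpB hrk hp hq) hij
  · have : Y i j = 0 := by
      by_contra h
      exact hij (mk_mem_cells.mpr ((hY.1 i j).mp h))
    simp [stacking, hij, this]

end RankedByEnds

noncomputable def endRank (hY : IsAdmissible d n pB Y) (hd : ∑ i, d i = n)
    (hpB : pB = #(rows d)) : {i // 0 < d i} ≃ Fin pB :=
  Equiv.ofBijective (fun x => ⟨n - Y x (d x), by
    have := hY.sub_lt_of_pos hd hpB x.2
    have : Y x (d x) ≤ n := hY.le_of_mem hd (end_mem_cells x.2)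
    omega⟩) <| by
    refine (Fintype.bijective_iff_injective_and_card _).mpr ⟨fun x y h => ?_, ?_⟩
    · have : Y x (d x) ≤ n := hY.le_of_mem hd (end_mem_cells x.2)
      have : Y y (d y) ≤ n := hY.le_of_mem hd (end_mem_cells y.2)
      rw [Fin.mk.injEq] at h
      exact Subtype.ext <| hY.injOn_end hd (mem_rows.mpr x.2) (mem_rows.mpr y.2)
        (show Y x (d x) = Y y (d y) by omega)
    · rw [Fintype.card_subtype, Fintype.card_fin, hpB]
      rfl

end IsAdmissible

theorem card_admissible {d : ι → ℕ} {n pB : ℕ} (hd : ∑ i, d i = n) (hpB : pB = #(rows d)) :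
    Nat.card {Y // IsAdmissible d n pB Y} = pB.factorial := by
  have hcard : Fintype.card {i // 0 < d i} = pB := by
    rw [Fintype.card_subtype, hpB]
    rfl
  have hpBn : pB ≤ n := hpB ▸ hd ▸ card_rows_le d
  let φ : {Y // IsAdmissible d n pB Y} ≃ ({i // 0 < d i} ≃ Fin pB) :=
    { toFun := fun Y => Y.2.endRank hd hpB
      invFun := fun e => ⟨stacking d (rowRank e), isAdmissible_stacking e hd⟩
      left_inv := fun Y => Subtype.ext (Y.2.eq_stacking hd hpB fun i hi => by
        simp [rowRank_of_pos _ hi, IsAdmissible.endRank]).symm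
      right_inv := fun e => Equiv.ext fun x => Fin.ext <| by
        have := (e x).2
        simp only [IsAdmissible.endRank, Equiv.ofBijective_apply, stacking_rowRank_end e hd]
        omega }
  rw [Nat.card_congr φ, Nat.card_eq_fintype_card,
    Fintype.card_equiv (Fintype.equivFinOfCardEq hcard), hcard]

end NumberedYoungDiagram

theorem stmt9_general (m n : ℕ) (d : Fin m → ℕ) (hd : ∑ i, d i = n)
    (pB : ℕ) (hpB : pB = (Finset.univ.filter (fun i : Fin m => 0 < d i)).card) :
    Nat.card {Y : Fin m → ℕ → ℕ //
      -- support given by the Young diagram `Z` of `d`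
      (∀ (i : Fin m) (j : ℕ), Y i j ≠ 0 ↔ (1 ≤ j ∧ j ≤ d i)) ∧
      -- each of `1, …, n` occurs exactly once (a numbering)
      (∀ v, 1 ≤ v → v ≤ n →
        ∃! p : Fin m × ℕ, 1 ≤ p.2 ∧ p.2 ≤ d p.1 ∧ Y p.1 p.2 = v) ∧
      -- (ii) values `n - p_B + 1, …, n` occur as last nonzero entries of rows
      (∀ v, n - pB + 1 ≤ v → v ≤ n →
        ∃ (i : Fin m) (j : ℕ), 1 ≤ j ∧ j ≤ n ∧ Y i j = v ∧ ∀ j', j < j' → Y i j' = 0) ∧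
      -- (iii)
      (∀ (i i' : Fin m) (j j' : ℕ), 1 ≤ j → 1 ≤ j' →
        Y i' (j' + 1) < Y i (j + 1) → 0 < Y i' (j' + 1) →
        (0 < Y i' j' ∧ Y i' j' < Y i j))} = Nat.factorial pB :=
  NumberedYoungDiagram.card_admissible hd hpB

/-- The number of admissible numbered Young diagrams with a given left-aligned support
pattern (Young diagram with dynamical indices `d`) equals `p_B!`, where `p_B` is the
number of nonzero rows. -/
theorem stmt9 (m n : ℕ) (d : Fin m → ℕ) (hd : ∑ i, d i = n) (hdle : ∀ i, d i ≤ n)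
    (pB : ℕ) (hpB : pB = (Finset.univ.filter (fun i : Fin m => 0 < d i)).card) :
    Nat.card {Y : Fin m → ℕ → ℕ //
      -- support given by the Young diagram `Z` of `d`
      (∀ (i : Fin m) (j : ℕ), Y i j ≠ 0 ↔ (1 ≤ j ∧ j ≤ d i)) ∧
      -- each of `1, …, n` occurs exactly once (a numbering)
      (∀ v, 1 ≤ v → v ≤ n →
        ∃! p : Fin m × ℕ, 1 ≤ p.2 ∧ p.2 ≤ d p.1 ∧ Y p.1 p.2 = v) ∧
      -- (ii) values `n - p_B + 1, …, n` occur as last nonzero entries of rows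
      (∀ v, n - pB + 1 ≤ v → v ≤ n →
        ∃ (i : Fin m) (j : ℕ), 1 ≤ j ∧ j ≤ n ∧ Y i j = v ∧ ∀ j', j < j' → Y i j' = 0) ∧
      -- (iii)
      (∀ (i i' : Fin m) (j j' : ℕ), 1 ≤ j → 1 ≤ j' →
        Y i' (j' + 1) < Y i (j + 1) → 0 < Y i' (j' + 1) →
        (0 < Y i' j' ∧ Y i' j' < Y i j))} = Nat.factorial pB :=
  stmt9_general m n d hd pB hpB
end

section
/- Let Z be an m×n Young diagram with dynamical indices d = (d₁,…,d_m). A left-aligned array Y ∈ 𝒴(m,n) with the same dynamical indices is an admissible numbered Young diagram if and only if there exists an m×m permutation matrix Π such that, when the columns of Π·Y_r are stacked into an nm-vector (where Y_r is the right-aligned version of Y, shifting each row i right by n−dᵢ positions) and the zero entries are deleted, the resulting vector is (1,2,…,n). -/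
/-!
After right-alignment the last entries of all nonempty rows sit in the final column. Condition (ii)
says, by counting the `p_B` last entries, exactly that every last entry exceeds every other entry;
condition (iii) says that comparisons between cells propagate one column to the left. So if the
rows are ordered by their last entries, induction on the distance to the final column shows that
the entries increase along the column-major reading order. Conversely, a sorted reading order
gives (ii) because the final column is read last, and (iii) because moving two cells one column
to the left does not change which of them is read first.
-/

open Finset

theorem Finset.bijOn_of_surjOn_of_card_le {α β : Type*} [DecidableEq β] {s : Finset α}
    {t : Finset β} {f : α → β} (hf : Set.SurjOn f s t) (hst : #s ≤ #t) : Set.BijOn f s t := by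
  have hts : t ⊆ s.image f := by rwa [← coe_subset, coe_image]
  have himage : s.image f = t := (eq_of_subset_of_card_le hts (card_image_le.trans hst)).symm
  refine ⟨?_, card_image_iff.mp ?_, hf⟩
  · rw [← himage, coe_image]
    exact Set.mapsTo_image f s
  · exact le_antisymm card_image_le (himage ▸ hst)

namespace NumberedDiagram

variable {m n : ℕ} {d : Fin m → ℕ} {Y : Fin m → ℕ → ℕ}

def cells (d : Fin m → ℕ) : Finset (Fin m × ℕ) :=
  univ.biUnion fun i => {i} ×ˢ Icc 1 (d i)

@[simp]
lemma mem_cells {i : Fin m} {j : ℕ} : (i, j) ∈ cells d ↔ 1 ≤ j ∧ j ≤ d i := by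
  simp [cells]

lemma card_cells : #(cells d) = ∑ i, d i := by
  rw [cells, card_biUnion]
  · simp
  · intro i _ i' _ hii'
    exact disjoint_product.2 (.inl (disjoint_singleton.2 hii'))

def IsLeftAligned (d : Fin m → ℕ) (Y : Fin m → ℕ → ℕ) : Prop :=
  ∀ i j, Y i j ≠ 0 ↔ 1 ≤ j ∧ j ≤ d i

def IsNumbering (n : ℕ) (d : Fin m → ℕ) (Y : Fin m → ℕ → ℕ) : Prop :=
  Set.BijOn (fun p : Fin m × ℕ => Y p.1 p.2) (cells d) (Set.Icc 1 n)

lemma IsNumbering.of_surjOn (hd : ∑ i, d i = n)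
    (hY : Set.SurjOn (fun p : Fin m × ℕ => Y p.1 p.2) (cells d) (Set.Icc 1 n)) :
    IsNumbering n d Y := by
  rw [← coe_Icc] at hY
  rw [IsNumbering, ← coe_Icc]
  exact bijOn_of_surjOn_of_card_le hY (by simp [card_cells, hd])

lemma IsNumbering.row_le (hY : IsNumbering n d Y) (i : Fin m) : d i ≤ n := by
  rw [IsNumbering, ← coe_Icc] at hY
  have hcard : #(cells d) = #(Icc 1 n) := card_nbij _ hY.mapsTo hY.injOn hY.surjOn
  rw [card_cells, Nat.card_Icc, Nat.add_sub_cancel] at hcard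
  exact hcard ▸ single_le_sum (fun _ _ => Nat.zero_le _) (mem_univ i)

lemma IsNumbering.lastEntry_injOn (hY : IsNumbering n d Y) :
    Set.InjOn (fun i => Y i (d i)) {i | 0 < d i} := fun i hi i' hi' h =>
  congrArg Prod.fst (hY.injOn (x₁ := (i, d i)) (x₂ := (i', d i'))
    (mem_cells.2 ⟨hi, le_rfl⟩) (mem_cells.2 ⟨hi', le_rfl⟩) h)

lemma IsNumbering.card_lastEntries (hY : IsNumbering n d Y) :
    #((univ.filter fun i => 0 < d i).image fun i => Y i (d i)) =
      #(univ.filter fun i => 0 < d i) :=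
  card_image_of_injOn fun i hi i' hi' =>
    hY.lastEntry_injOn (by simpa using hi) (by simpa using hi')

lemma IsNumbering.lastEntry_lt_of_sort_symm_lt (hY : IsNumbering n d Y) {r r' : Fin m}
    (hr : 0 < d r) (hr' : 0 < d r')
    (h : (Tuple.sort fun i => Y i (d i)).symm r < (Tuple.sort fun i => Y i (d i)).symm r') :
    Y r (d r) < Y r' (d r') := by
  have hle := Tuple.monotone_sort (fun i => Y i (d i)) h.le
  simp only [Function.comp, Equiv.apply_symm_apply] at hle
  exact hle.lt_of_ne fun heq => h.ne (congrArg _ (hY.lastEntry_injOn hr hr' heq))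

/-- Admissibility condition (ii). -/
def TopValuesEndRows (n : ℕ) (d : Fin m → ℕ) (Y : Fin m → ℕ → ℕ) : Prop :=
  ∀ v, n - #(univ.filter fun i : Fin m => 0 < d i) + 1 ≤ v → v ≤ n →
    ∃ (i : Fin m) (j : ℕ), 1 ≤ j ∧ j ≤ n ∧ Y i j = v ∧ ∀ j', j < j' → Y i j' = 0

/-- Admissibility condition (iii). -/
def LeftNeighborsOrdered (Y : Fin m → ℕ → ℕ) : Prop :=
  ∀ (i i' : Fin m) (j j' : ℕ), 1 ≤ j → 1 ≤ j' →
    Y i' (j' + 1) < Y i (j + 1) → 0 < Y i' (j' + 1) → (0 < Y i' j' ∧ Y i' j' < Y i j)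

def LastEntriesDominate (d : Fin m → ℕ) (Y : Fin m → ℕ → ℕ) : Prop :=
  ∀ i i' j, 1 ≤ j → j < d i → 0 < d i' → Y i j < Y i' (d i')

lemma lastEntriesDominate_of_topValuesEndRows (hL : IsLeftAligned d Y) (hY : IsNumbering n d Y)
    (htop : TopValuesEndRows n d Y) : LastEntriesDominate d Y := by
  unfold TopValuesEndRows at htop
  set rows := univ.filter fun i : Fin m => 0 < d i
  set ends := rows.image fun i => Y i (d i)
  have hends_card : #ends = #rows := hY.card_lastEntries
  have hrows_le : #rows ≤ n := by
    have hsub : ends ⊆ Icc 1 n := fun v hv => by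
      obtain ⟨i, hi, rfl⟩ := mem_image.1 hv
      exact mem_Icc.2 (hY.mapsTo (mem_cells.2 ⟨(mem_filter.1 hi).2, le_rfl⟩))
    simpa [hends_card] using card_le_card hsub
  have hsub : Ioc (n - #rows) n ⊆ ends := by
    intro v hv
    rw [mem_Ioc] at hv
    obtain ⟨i, j, hj, -, rfl, hlast⟩ := htop v (by omega) hv.2
    have hjd : j ≤ d i := ((hL i j).1 (by omega)).2
    obtain rfl : j = d i := by
      by_contra hne
      exact (hL i (j + 1)).2 ⟨by omega, by omega⟩ (hlast (j + 1) (by omega))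
    exact mem_image_of_mem _ (mem_filter.2 ⟨mem_univ i, hj⟩)
  have hends : ends = Ioc (n - #rows) n :=
    (eq_of_subset_of_card_le hsub (by simp [hends_card]; omega)).symm
  intro i i' j hj hjd hd'
  have hlast : Y i' (d i') ∈ Ioc (n - #rows) n :=
    hends ▸ mem_image_of_mem _ (mem_filter.2 ⟨mem_univ i', hd'⟩)
  have hmid : Y i j ≤ n - #rows := by
    by_contra! hgt
    have hcell : (i, j) ∈ cells d := mem_cells.2 ⟨hj, hjd.le⟩
    obtain ⟨r, hr, hrY⟩ := mem_image.1 (hends ▸ mem_Ioc.2 ⟨hgt, (hY.mapsTo hcell).2⟩)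
    obtain ⟨rfl, rfl⟩ :=
      Prod.mk.inj (hY.injOn (mem_cells.2 ⟨(mem_filter.1 hr).2, le_rfl⟩) hcell hrY)
    exact lt_irrefl _ hjd
  exact hmid.trans_lt (mem_Ioc.1 hlast).1

lemma topValuesEndRows_of_lastEntriesDominate (hL : IsLeftAligned d Y) (hY : IsNumbering n d Y)
    (hdom : LastEntriesDominate d Y) : TopValuesEndRows n d Y := by
  intro v hv hvn
  obtain ⟨⟨i, j⟩, hij, rfl⟩ := hY.surjOn ⟨by omega, hvn⟩
  rw [mem_coe, mem_cells] at hij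
  dsimp only at hv hvn ⊢
  obtain rfl | hjd := hij.2.eq_or_lt
  · refine ⟨i, d i, hij.1, hY.row_le i, rfl, fun j' hj' => ?_⟩
    by_contra hne
    have := (hL i j').1 hne
    omega
  · have hsub : (univ.filter fun i => 0 < d i).image (fun i => Y i (d i)) ⊆ Ioc (Y i j) n := by
      intro w hw
      obtain ⟨r, hr, rfl⟩ := mem_image.1 hw
      have hr := (mem_filter.1 hr).2
      exact mem_Ioc.2 ⟨hdom i r j hij.1 hjd hr, (hY.mapsTo (mem_cells.2 ⟨hr, le_rfl⟩)).2⟩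
    have := card_le_card hsub
    rw [hY.card_lastEntries, Nat.card_Ioc] at this
    omega

variable {β : Type*}

/-- Column-major reading order of the right-aligned array, ties within a column broken by `κ`.
The right-aligned column of `(i, j)` is `j + (n - d i)`; columns are compared here as
`j + d i' < j' + d i`, which avoids truncated subtraction. -/
def ReadsBefore [LT β] (d : Fin m → ℕ) (κ : Fin m → β) (i : Fin m) (j : ℕ) (i' : Fin m)
    (j' : ℕ) : Prop :=
  j + d i' < j' + d i ∨ (j + d i' = j' + d i ∧ κ i < κ i')

def ReadingSorted [LT β] (d : Fin m → ℕ) (Y : Fin m → ℕ → ℕ) (κ : Fin m → β) : Prop :=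
  ∀ ⦃i i' j j'⦄, (i, j) ∈ cells d → (i', j') ∈ cells d → ReadsBefore d κ i j i' j' →
    Y i j < Y i' j'

lemma readsBefore_succ_succ [LT β] {κ : Fin m → β} {i i' : Fin m} {j j' : ℕ} :
    ReadsBefore d κ i (j + 1) i' (j' + 1) ↔ ReadsBefore d κ i j i' j' := by
  simp [ReadsBefore, Nat.add_right_comm _ 1]

lemma readsBefore_or_readsBefore [LinearOrder β] {κ : Fin m → β} (hκ : Function.Injective κ)
    {i i' : Fin m} {j j' : ℕ} (hne : (i, j) ≠ (i', j')) :
    ReadsBefore d κ i j i' j' ∨ ReadsBefore d κ i' j' i j := by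
  rcases lt_trichotomy (j + d i') (j' + d i) with h | h | h
  · exact .inl (.inl h)
  · have hii : i ≠ i' := by
      rintro rfl
      exact hne (by simp only [Prod.mk.injEq, true_and]; omega)
    rcases (hκ.ne hii).lt_or_gt with hκ' | hκ'
    · exact .inl (.inr ⟨h, hκ'⟩)
    · exact .inr (.inr ⟨h.symm, hκ'⟩)
  · exact .inr (.inl h)

lemma ReadingSorted.mono {γ : Type*} [LT β] [LT γ] {κ : Fin m → β} {κ' : Fin m → γ}
    (h : ReadingSorted d Y κ) (hκ : ∀ i i', 0 < d i → 0 < d i' → κ' i < κ' i' → κ i < κ i') :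
    ReadingSorted d Y κ' := by
  intro i i' j j' hij hij' hrb
  rw [mem_cells] at hij hij'
  exact h (mem_cells.2 hij) (mem_cells.2 hij')
    (hrb.imp_right fun ⟨heq, hlt⟩ => ⟨heq, hκ i i' (by omega) (by omega) hlt⟩)

lemma ReadingSorted.lastEntriesDominate [LT β] {κ : Fin m → β} (h : ReadingSorted d Y κ) :
    LastEntriesDominate d Y := fun i i' j hj hjd hd' =>
  h (mem_cells.2 ⟨hj, hjd.le⟩) (mem_cells.2 ⟨hd', le_rfl⟩) (Or.inl (by omega))

lemma ReadingSorted.leftNeighborsOrdered [LinearOrder β] {κ : Fin m → β}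
    (hκ : Function.Injective κ) (hL : IsLeftAligned d Y) (h : ReadingSorted d Y κ) :
    LeftNeighborsOrdered Y := by
  intro i i' j j' hj hj' hlt hpos
  have hc' := mem_cells.2 ((hL i' (j' + 1)).1 hpos.ne')
  have hc := mem_cells.2 ((hL i (j + 1)).1 (by omega))
  have hrb : ReadsBefore d κ i' (j' + 1) i (j + 1) :=
    (readsBefore_or_readsBefore hκ fun heq => by cases heq; exact lt_irrefl _ hlt).resolve_right
      fun hrb => (h hc hc' hrb).not_gt hlt
  rw [mem_cells] at hc hc'
  exact ⟨Nat.pos_of_ne_zero ((hL i' j').2 ⟨hj', by omega⟩),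
    h (mem_cells.2 ⟨hj', by omega⟩) (mem_cells.2 ⟨hj, by omega⟩) (readsBefore_succ_succ.1 hrb)⟩


lemma LastEntriesDominate.lt_lastEntry (hdom : LastEntriesDominate d Y) {i i' : Fin m} {j : ℕ}
    (hij : (i, j) ∈ cells d) (hi' : 0 < d i')
    (hrb : ReadsBefore d (fun r => Y r (d r)) i j i' (d i')) : Y i j < Y i' (d i') := by
  rw [mem_cells] at hij
  rcases hrb with hlt | ⟨heq, hlast⟩
  · exact hdom i i' j hij.1 (by omega) hi'
  · obtain rfl : j = d i := by omega
    exact hlast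

lemma readingSorted_of_lastEntriesDominate (hL : IsLeftAligned d Y)
    (hdom : LastEntriesDominate d Y) (hord : LeftNeighborsOrdered Y) :
    ReadingSorted d Y fun r => Y r (d r) := by
  suffices h : ∀ k i i' j j', d i' - j' ≤ k → (i, j) ∈ cells d → (i', j') ∈ cells d →
      ReadsBefore d (fun r => Y r (d r)) i j i' j' → Y i j < Y i' j' from
    fun i i' j j' => h _ i i' j j' le_rfl
  intro k
  induction k with
  | zero =>
    intro i i' j j' hk hij hij' hrb
    rw [mem_cells] at hij'
    obtain rfl : j' = d i' := by omega
    exact hdom.lt_lastEntry hij (by omega) hrb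
  | succ k ih =>
    intro i i' j j' hk hij hij' hrb
    rw [mem_cells] at hij hij'
    obtain rfl | hj' := hij'.2.eq_or_lt
    · exact hdom.lt_lastEntry (mem_cells.2 hij) (by omega) hrb
    have hj : j < d i := by rcases hrb with h | h <;> omega
    have hnext := ih i i' (j + 1) (j' + 1) (by omega) (mem_cells.2 ⟨by omega, hj⟩)
      (mem_cells.2 ⟨by omega, hj'⟩) (readsBefore_succ_succ.2 hrb)
    exact (hord i' i j' j hij'.1 hij.1 hnext (Nat.pos_of_ne_zero ((hL i _).2 ⟨by omega, hj⟩))).2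

def rightAlign (n : ℕ) (d : Fin m → ℕ) (Y : Fin m → ℕ → ℕ) (i : Fin m) (j : ℕ) : ℕ :=
  if n - d i < j ∧ j ≤ n then Y i (j - (n - d i)) else 0

lemma rightAlign_add {i : Fin m} {a : ℕ} (hdi : d i ≤ n) (ha : (i, a) ∈ cells d) :
    rightAlign n d Y i (a + (n - d i)) = Y i a := by
  rw [mem_cells] at ha
  rw [rightAlign, if_pos (by omega), Nat.add_sub_cancel]

lemma exists_of_rightAlign_ne_zero (hL : IsLeftAligned d Y) {i : Fin m} {c : ℕ}
    (h : rightAlign n d Y i c ≠ 0) : ∃ a, (i, a) ∈ cells d ∧ a + (n - d i) = c := by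
  unfold rightAlign at h
  split_ifs at h with hc
  · exact ⟨c - (n - d i), mem_cells.2 ((hL i _).1 h), by omega⟩
  · exact absurd rfl h

lemma rightAlign_sorted_iff (hL : IsLeftAligned d Y) (hdle : ∀ i, d i ≤ n)
    (σ : Equiv.Perm (Fin m)) :
    (∀ (i i' : Fin m) (j j' : ℕ), 1 ≤ j → j ≤ n → 1 ≤ j' → j' ≤ n →
      rightAlign n d Y (σ i) j ≠ 0 → rightAlign n d Y (σ i') j' ≠ 0 →
      (j < j' ∨ (j = j' ∧ i < i')) → rightAlign n d Y (σ i) j < rightAlign n d Y (σ i') j') ↔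
    ReadingSorted d Y σ.symm := by
  constructor
  · intro h r r' a a' ha ha' hrb
    have := h (σ.symm r) (σ.symm r') (a + (n - d r)) (a' + (n - d r'))
    simp only [Equiv.apply_symm_apply, rightAlign_add (hdle _) ha,
      rightAlign_add (hdle _) ha'] at this
    have hr := hdle r; have hr' := hdle r'
    rw [mem_cells] at ha ha'
    refine this (by omega) (by omega) (by omega) (by omega) ((hL r a).2 ha) ((hL r' a').2 ha') ?_
    rcases hrb with hlt | ⟨heq, hlt⟩
    · exact .inl (by omega)
    · exact .inr ⟨by omega, hlt⟩
  · intro h i i' j j' _ _ _ _ hne hne' hlex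
    obtain ⟨a, ha, rfl⟩ := exists_of_rightAlign_ne_zero hL hne
    obtain ⟨a', ha', rfl⟩ := exists_of_rightAlign_ne_zero hL hne'
    rw [rightAlign_add (hdle _) ha, rightAlign_add (hdle _) ha']
    refine h ha ha' ?_
    have hr := hdle (σ i); have hr' := hdle (σ i')
    rcases hlex with hlt | ⟨heq, hlt⟩
    · exact .inl (by omega)
    · exact .inr ⟨by omega, by simpa using hlt⟩

end NumberedDiagram

open NumberedDiagram in
theorem stmt10_general (m n : ℕ) (d : Fin m → ℕ) (hd : ∑ i, d i = n)
    (pB : ℕ) (hpB : pB = (Finset.univ.filter (fun i : Fin m => 0 < d i)).card)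
    (Y : Fin m → ℕ → ℕ)
    (hsupp : ∀ (i : Fin m) (j : ℕ), Y i j ≠ 0 ↔ (1 ≤ j ∧ j ≤ d i))
    (hYnum : ∀ v, 1 ≤ v → v ≤ n →
      ∃! p : Fin m × ℕ, 1 ≤ p.2 ∧ p.2 ≤ d p.1 ∧ Y p.1 p.2 = v)
    -- the right-aligned version of `Y`
    (Yr : Fin m → ℕ → ℕ)
    (hYr : ∀ (i : Fin m) (j : ℕ),
      Yr i j = if n - d i < j ∧ j ≤ n then Y i (j - (n - d i)) else 0) :
    -- admissibility of `Y` ((ii) and (iii); left-alignedness (i) holds by `hsupp`)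
    ((∀ v, n - pB + 1 ≤ v → v ≤ n →
        ∃ (i : Fin m) (j : ℕ), 1 ≤ j ∧ j ≤ n ∧ Y i j = v ∧ ∀ j', j < j' → Y i j' = 0) ∧
     (∀ (i i' : Fin m) (j j' : ℕ), 1 ≤ j → 1 ≤ j' →
        Y i' (j' + 1) < Y i (j + 1) → 0 < Y i' (j' + 1) →
        (0 < Y i' j' ∧ Y i' j' < Y i j)))
    ↔ ∃ σ : Equiv.Perm (Fin m),
        ∀ (i i' : Fin m) (j j' : ℕ), 1 ≤ j → j ≤ n → 1 ≤ j' → j' ≤ n →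
          Yr (σ i) j ≠ 0 → Yr (σ i') j' ≠ 0 →
          (j < j' ∨ (j = j' ∧ i < i')) → Yr (σ i) j < Yr (σ i') j' := by
  obtain rfl : Yr = rightAlign n d Y := funext fun i => funext (hYr i)
  subst hpB
  have hY : IsNumbering n d Y := .of_surjOn hd fun v hv =>
    let ⟨⟨i, j⟩, ⟨hj, hjd, hv⟩, _⟩ := hYnum v hv.1 hv.2
    ⟨(i, j), mem_cells.2 ⟨hj, hjd⟩, hv⟩
  constructor
  · rintro ⟨htop, hord⟩
    have hsorted := readingSorted_of_lastEntriesDominate hsupp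
      (lastEntriesDominate_of_topValuesEndRows hsupp hY htop) hord
    exact ⟨_, (rightAlign_sorted_iff hsupp hY.row_le _).2
      (hsorted.mono fun _ _ hr hr' => hY.lastEntry_lt_of_sort_symm_lt hr hr')⟩
  · rintro ⟨σ, hσ⟩
    have hsorted := (rightAlign_sorted_iff hsupp hY.row_le σ).1 hσ
    exact ⟨topValuesEndRows_of_lastEntriesDominate hsupp hY hsorted.lastEntriesDominate,
      hsorted.leftNeighborsOrdered σ.symm.injective hsupp⟩

/-- A left-aligned numbered array `Y` with dynamical indices `d` is an admissible numbered
Young diagram iff some permutation `Π` of the rows of the right-aligned version `Y_r`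
makes the nonzero entries, read in column-major order, appear as `1, 2, …, n`. -/
theorem stmt10 (m n : ℕ) (d : Fin m → ℕ) (hd : ∑ i, d i = n) (hdle : ∀ i, d i ≤ n)
    (pB : ℕ) (hpB : pB = (Finset.univ.filter (fun i : Fin m => 0 < d i)).card)
    (Y : Fin m → ℕ → ℕ)
    (hsupp : ∀ (i : Fin m) (j : ℕ), Y i j ≠ 0 ↔ (1 ≤ j ∧ j ≤ d i))
    (hYnum : ∀ v, 1 ≤ v → v ≤ n →
      ∃! p : Fin m × ℕ, 1 ≤ p.2 ∧ p.2 ≤ d p.1 ∧ Y p.1 p.2 = v)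
    -- the right-aligned version of `Y`
    (Yr : Fin m → ℕ → ℕ)
    (hYr : ∀ (i : Fin m) (j : ℕ),
      Yr i j = if n - d i < j ∧ j ≤ n then Y i (j - (n - d i)) else 0) :
    -- admissibility of `Y` ((ii) and (iii); left-alignedness (i) holds by `hsupp`)
    ((∀ v, n - pB + 1 ≤ v → v ≤ n →
        ∃ (i : Fin m) (j : ℕ), 1 ≤ j ∧ j ≤ n ∧ Y i j = v ∧ ∀ j', j < j' → Y i j' = 0) ∧
     (∀ (i i' : Fin m) (j j' : ℕ), 1 ≤ j → 1 ≤ j' →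
        Y i' (j' + 1) < Y i (j + 1) → 0 < Y i' (j' + 1) →
        (0 < Y i' j' ∧ Y i' j' < Y i j)))
    ↔ ∃ σ : Equiv.Perm (Fin m),
        ∀ (i i' : Fin m) (j j' : ℕ), 1 ≤ j → j ≤ n → 1 ≤ j' → j' ≤ n →
          Yr (σ i) j ≠ 0 → Yr (σ i') j' ≠ 0 →
          (j < j' ∨ (j = j' ∧ i < i')) → Yr (σ i) j < Yr (σ i') j' :=
  stmt10_general m n d hd pB hpB Y hsupp hYnum Yr hYr
end

section
/- Let R = [[D, C],[B, A]] be an (m+n)×(m+n) orthogonal real matrix (D is m×m, A is n×n) such that the pair (A,B) is controllable. Then every eigenvalue of A has modulus strictly less than 1. -/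
open Matrix
open scoped ComplexOrder

/-!
Since `R` is orthogonal, so is `Rᵀ`, and the lower-right block of `R Rᵀ = 1` reads
`B Bᵀ + A Aᵀ = 1`. For a left eigenvector `x` of `A` with eigenvalue `μ` this gives
`‖x B‖² + |μ|² ‖x‖² = ‖x‖²`, so `|μ| ≥ 1` forces `x B = 0`, hence `x Aᵏ B = μᵏ x B = 0`
for all `k`, and controllability (applied to the real and imaginary parts of `x`) gives `x = 0`.
-/

namespace Matrix

variable {ι κ : Type*} [Fintype ι]

theorem star_vecMul_dotProduct_vecMul [Fintype κ] {R : Type*} [CommRing R] [StarRing R]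
    (x : ι → R) (M : Matrix ι κ R) :
    star (x ᵥ* M) ⬝ᵥ (x ᵥ* M) = x ⬝ᵥ (M * Mᴴ) *ᵥ star x := by
  rw [star_vecMul, dotProduct_comm, ← mulVec_mulVec, dotProduct_mulVec x M]

theorem vecMul_pow_of_vecMul_eq_smul {R : Type*} [CommSemiring R] [DecidableEq ι]
    {A : Matrix ι ι R} {x : ι → R} {μ : R} (hx : x ᵥ* A = μ • x) (k : ℕ) :
    x ᵥ* (A ^ k) = μ ^ k • x := by
  induction k with
  | zero => simp
  | succ k ih => rw [pow_succ, ← vecMul_vecMul, ih, smul_vecMul, hx, smul_smul, pow_succ]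

theorem exists_vecMul_eq_smul_of_mem_spectrum {K : Type*} [Field K] [DecidableEq ι]
    {A : Matrix ι ι K} {μ : K} (hμ : μ ∈ spectrum K A) : ∃ x ≠ 0, x ᵥ* A = μ • x := by
  rw [spectrum.mem_iff, isUnit_iff_isUnit_det, isUnit_iff_ne_zero, not_not,
    ← exists_vecMul_eq_zero_iff] at hμ
  obtain ⟨x, hx0, hx⟩ := hμ
  refine ⟨x, hx0, ?_⟩
  rwa [vecMul_sub, sub_eq_zero, Algebra.algebraMap_eq_smul_one, vecMul_smul, vecMul_one,
    eq_comm] at hx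

theorem transpose_mul_self_eq_one_fromBlocks {m n R : Type*} [Fintype m] [Fintype n]
    [DecidableEq m] [DecidableEq n] [CommRing R]
    {D : Matrix m m R} {C : Matrix m n R} {B : Matrix n m R} {A : Matrix n n R}
    (h : (fromBlocks D C B A)ᵀ * fromBlocks D C B A = 1) : B * Bᵀ + A * Aᵀ = 1 := by
  have hR := mul_eq_one_comm.mp h
  rw [fromBlocks_transpose, fromBlocks_multiply, ← fromBlocks_one] at hR
  exact (fromBlocks_inj.mp hR).2.2.2

theorem conjTranspose_map_ofReal {m n : Type*} (M : Matrix m n ℝ) :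
    (M.map Complex.ofReal)ᴴ = Mᵀ.map Complex.ofReal := by
  ext
  simp

theorem vecMul_eq_zero_of_one_le_norm [Fintype κ] [DecidableEq ι]
    {A : Matrix ι ι ℂ} {B : Matrix ι κ ℂ} (hAB : B * Bᴴ + A * Aᴴ = 1)
    {x : ι → ℂ} {μ : ℂ} (hx : x ᵥ* A = μ • x) (hμ : 1 ≤ ‖μ‖) :
    x ᵥ* B = 0 := by
  have hsum : star (x ᵥ* B) ⬝ᵥ (x ᵥ* B) + star (x ᵥ* A) ⬝ᵥ (x ᵥ* A) = star x ⬝ᵥ x := by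
    rw [star_vecMul_dotProduct_vecMul, star_vecMul_dotProduct_vecMul, ← dotProduct_add,
      ← add_mulVec, hAB, one_mulVec, dotProduct_comm]
  have hA : star (x ᵥ* A) ⬝ᵥ (x ᵥ* A) = (‖μ‖ : ℂ) ^ 2 * (star x ⬝ᵥ x) := by
    rw [hx, star_smul, smul_dotProduct, dotProduct_smul, smul_eq_mul, smul_eq_mul, ← mul_assoc,
      Complex.star_def, Complex.conj_mul']
  have hcoef : 1 - (‖μ‖ : ℂ) ^ 2 ≤ 0 := by
    exact_mod_cast (show 1 - ‖μ‖ ^ 2 ≤ 0 by nlinarith)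
  rw [← dotProduct_star_self_eq_zero]
  refine le_antisymm ?_ (dotProduct_star_self_nonneg _)
  calc star (x ᵥ* B) ⬝ᵥ (x ᵥ* B) = (1 - (‖μ‖ : ℂ) ^ 2) * (star x ⬝ᵥ x) := by
        linear_combination hsum - hA
    _ ≤ 0 := mul_nonpos_of_nonpos_of_nonneg hcoef (dotProduct_star_self_nonneg _)

theorem vecMul_map_ofReal_eq_zero_iff (x : ι → ℂ) (M : Matrix ι κ ℝ) :
    x ᵥ* M.map Complex.ofReal = 0 ↔
      (fun i ↦ (x i).re) ᵥ* M = 0 ∧ (fun i ↦ (x i).im) ᵥ* M = 0 := by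
  simp only [funext_iff, Complex.ext_iff, vecMul, dotProduct, map_apply, Pi.zero_apply,
    Complex.re_sum, Complex.im_sum, Complex.mul_re, Complex.mul_im, Complex.ofReal_re,
    Complex.ofReal_im, mul_zero, sub_zero, zero_add, Complex.zero_re, Complex.zero_im]
  exact forall_and

theorem map_ofReal_mul {l : Type*} (L : Matrix l ι ℝ) (M : Matrix ι κ ℝ) :
    (L * M).map Complex.ofReal = L.map Complex.ofReal * M.map Complex.ofReal :=
  Matrix.map_mul (f := Complex.ofRealHom)

theorem map_ofReal_pow_mul [DecidableEq ι] (A : Matrix ι ι ℝ) (B : Matrix ι κ ℝ) (k : ℕ) :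
    (A ^ k * B).map Complex.ofReal = A.map Complex.ofReal ^ k * B.map Complex.ofReal := by
  rw [map_ofReal_mul]
  exact congrArg (· * _) (Matrix.map_pow A Complex.ofRealHom k)

theorem map_ofReal_mul_conjTranspose_add_eq_one [Fintype κ] [DecidableEq ι]
    {A : Matrix ι ι ℝ} {B : Matrix ι κ ℝ} (h : B * Bᵀ + A * Aᵀ = 1) :
    B.map Complex.ofReal * (B.map Complex.ofReal)ᴴ + A.map Complex.ofReal * (A.map Complex.ofReal)ᴴ
      = 1 := by
  rw [conjTranspose_map_ofReal, conjTranspose_map_ofReal, ← map_ofReal_mul, ← map_ofReal_mul,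
    ← Matrix.map_add _ Complex.ofReal_add, h,
    Matrix.map_one _ Complex.ofReal_zero Complex.ofReal_one]

theorem eq_zero_of_forall_vecMul_pow_mul_map_ofReal_eq_zero [DecidableEq ι] {N : ℕ}
    {A : Matrix ι ι ℝ} {B : Matrix ι κ ℝ}
    (hctrb : ∀ x : ι → ℝ, (∀ k : ℕ, k < N → x ᵥ* (A ^ k * B) = 0) → x = 0)
    {x : ι → ℂ} (hx : ∀ k : ℕ, k < N → x ᵥ* (A.map Complex.ofReal ^ k * B.map Complex.ofReal) = 0) :
    x = 0 := by
  have hparts (k : ℕ) (hk : k < N) := (vecMul_map_ofReal_eq_zero_iff x (A ^ k * B)).mp <| by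
    rw [map_ofReal_pow_mul]
    exact hx k hk
  have hre := hctrb _ fun k hk ↦ (hparts k hk).1
  have him := hctrb _ fun k hk ↦ (hparts k hk).2
  funext i
  exact Complex.ext (congrFun hre i) (congrFun him i)

end Matrix

/-- If `R = [[D, C], [B, A]]` is an orthogonal real matrix and the pair `(A, B)` is
controllable, then every (complex) eigenvalue of `A` has modulus strictly less than 1. -/
theorem stmt14 (m n : ℕ)
    (D : Matrix (Fin m) (Fin m) ℝ) (C : Matrix (Fin m) (Fin n) ℝ)
    (B : Matrix (Fin n) (Fin m) ℝ) (A : Matrix (Fin n) (Fin n) ℝ)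
    (horth : (Matrix.fromBlocks D C B A)ᵀ * Matrix.fromBlocks D C B A = 1)
    -- controllability: the controllability matrix has full row rank `n`
    (hctrb : ∀ x : Fin n → ℝ,
      (∀ k : ℕ, k < n → Matrix.vecMul x ((A ^ k) * B) = 0) → x = 0) :
    ∀ μ : ℂ, μ ∈ spectrum ℂ (A.map (Complex.ofReal : ℝ → ℂ)) → ‖μ‖ < 1 := by
  intro μ hμ
  by_contra! hμ1
  obtain ⟨x, hx0, hx⟩ := exists_vecMul_eq_smul_of_mem_spectrum hμ
  have hAB := map_ofReal_mul_conjTranspose_add_eq_one (transpose_mul_self_eq_one_fromBlocks horth)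
  have hxB := vecMul_eq_zero_of_one_le_norm hAB hx hμ1
  refine hx0 (eq_zero_of_forall_vecMul_pow_mul_map_ofReal_eq_zero hctrb fun k _ ↦ ?_)
  rw [← vecMul_vecMul, vecMul_pow_of_vecMul_eq_smul hx, smul_vecMul, hxB, smul_zero]
end

section
/- Let A be an n×n real matrix with spectral radius less than 1, and B an n×m real matrix. Then the Lyapunov–Stein equation W − A W Aᵀ = B Bᵀ has a unique solution W, it is positive semidefinite, equals ∑_{k=0}^∞ A^k B Bᵀ (Aᵀ)^k, and W is positive definite if and only if (A,B) is controllable. -/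
/-! Gelfand's formula and the root test turn `ρ(A) < 1` into summability of `‖Aᵏ‖`, so
`W = ∑ Aᵏ M (Aᵀ)ᵏ` converges and an index shift gives `W - A W Aᵀ = M`; a solution `E` of the
homogeneous equation satisfies `E = Aᵏ E (Aᵀ)ᵏ → 0`, whence uniqueness. For `M = B Bᵀ`,
`xᵀ W x = ∑ ‖xᵀ Aᵏ B‖²`, so `W` is positive semidefinite and `xᵀ W x = 0` iff `xᵀ Aᵏ B = 0` for
every `k`; by Cayley–Hamilton it suffices to have this for `k < n`. -/

open Filter Matrix

section SteinSeries

variable {R : Type*} [Ring R]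

theorem mul_pow_mul_mul_pow_mul (a b m : R) (k : ℕ) :
    a * (a ^ k * m * b ^ k) * b = a ^ (k + 1) * m * b ^ (k + 1) := by
  rw [pow_succ' a, pow_succ b]
  simp only [mul_assoc]

variable [TopologicalSpace R] [T2Space R]

theorem HasSum.sub_mul_mul_eq [IsTopologicalRing R] {a b m W : R}
    (h : HasSum (fun k => a ^ k * m * b ^ k) W) : W - a * W * b = m := by
  have hshift : HasSum (fun k => a ^ (k + 1) * m * b ^ (k + 1)) (a * W * b) := by
    simpa only [mul_pow_mul_mul_pow_mul] using (h.mul_left a).mul_right b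
  have := (hasSum_nat_add_iff' 1).2 h
  simp only [Finset.range_one, Finset.sum_singleton, pow_zero, one_mul, mul_one] at this
  rw [hshift.unique this]
  abel

theorem eq_zero_of_eq_mul_mul [IsTopologicalAddGroup R] {a b e : R}
    (hs : Summable fun k => a ^ k * e * b ^ k) (he : e = a * e * b) : e = 0 := by
  have hconst : ∀ k, a ^ k * e * b ^ k = e := by
    intro k
    induction k with
    | zero => simp
    | succ k ih => rw [← mul_pow_mul_mul_pow_mul, ih, ← he]
  simpa only [hconst, tendsto_const_nhds_iff] using hs.tendsto_atTop_zero

theorem eq_of_sub_mul_mul_eq [IsTopologicalAddGroup R] {a b x y : R}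
    (hs : Summable fun k => a ^ k * (x - y) * b ^ k) (h : x - a * x * b = y - a * y * b) :
    x = y :=
  sub_eq_zero.mp <| eq_zero_of_eq_mul_mul hs <| by
    rw [mul_sub, sub_mul]
    exact sub_eq_sub_iff_sub_eq_sub.mp h

end SteinSeries

theorem summable_pow_mul_mul_pow {R : Type*} [NormedRing R] [CompleteSpace R] {a b : R}
    (ha : Summable fun k => ‖a ^ k‖) (hb : Summable fun k => ‖b ^ k‖) (m : R) :
    Summable fun k => a ^ k * m * b ^ k := by
  refine Summable.of_norm_bounded ((ha.mul_right (‖m‖ * ∑' j, ‖b ^ j‖))) fun k => ?_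
  calc ‖a ^ k * m * b ^ k‖ ≤ ‖a ^ k‖ * ‖m‖ * ‖b ^ k‖ := norm_mul₃_le
    _ ≤ ‖a ^ k‖ * (‖m‖ * ∑' j, ‖b ^ j‖) := by
      rw [mul_assoc]
      gcongr
      exact hb.le_tsum k fun j _ => norm_nonneg _

theorem summable_of_eventually_rpow_inv_lt {f : ℕ → ℝ} (hf : ∀ k, 0 ≤ f k) {r : ℝ} (hr : r < 1)
    (h : ∀ᶠ k : ℕ in atTop, f k ^ (k⁻¹ : ℝ) < r) : Summable f := by
  obtain ⟨N, hN⟩ := (h.and (eventually_ge_atTop 1)).exists_forall_of_atTop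
  have hr0 : 0 ≤ r := (Real.rpow_nonneg (hf N) _).trans (hN N le_rfl).1.le
  refine Summable.of_norm_bounded_eventually_nat (summable_geometric_of_lt_one hr0 hr) ?_
  filter_upwards [eventually_ge_atTop N] with k hk
  obtain ⟨hlt, hk1⟩ := hN k hk
  rw [Real.norm_of_nonneg (hf k),
    ← Real.rpow_inv_natCast_pow (hf k) (Nat.one_le_iff_ne_zero.mp hk1)]
  exact pow_le_pow_left₀ (Real.rpow_nonneg (hf k) _) hlt.le k

theorem summable_norm_pow_of_spectralRadius_lt_one {E : Type*} [NormedRing E]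
    [NormedAlgebra ℂ E] [CompleteSpace E] {a : E} (h : spectralRadius ℂ a < 1) :
    Summable fun k => ‖a ^ k‖ := by
  obtain ⟨r, hρr, hr1⟩ := ENNReal.lt_iff_exists_nnreal_btwn.mp h
  refine summable_of_eventually_rpow_inv_lt (fun _ => norm_nonneg _) (r := r)
    (by exact_mod_cast hr1) ?_
  filter_upwards [(spectrum.pow_norm_pow_one_div_tendsto_nhds_spectralRadius a).eventually_lt_const
    hρr] with k hk
  rw [one_div] at hk
  exact (ENNReal.ofReal_lt_coe_iff (Real.rpow_nonneg (norm_nonneg _) _)).mp hk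

theorem Matrix.spectrum_transpose {R ι : Type*} [CommRing R] [Fintype ι] [DecidableEq ι]
    (M : Matrix ι ι R) : spectrum R Mᵀ = spectrum R M := by
  ext μ
  rw [spectrum.mem_iff, spectrum.mem_iff, ← isUnit_transpose, transpose_sub,
    algebraMap_eq_diagonal, diagonal_transpose, transpose_transpose]

theorem Matrix.spectralRadius_transpose {𝕜 ι : Type*} [NormedField 𝕜] [Fintype ι]
    [DecidableEq ι] (M : Matrix ι ι 𝕜) : spectralRadius 𝕜 Mᵀ = spectralRadius 𝕜 M := by
  rw [spectralRadius, spectralRadius, spectrum_transpose]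

section LinftyOpNorm

-- The `ℓ∞` operator norm: submultiplicative, `‖1‖ = 1`, and unchanged by `map Complex.ofReal`.
attribute [local instance] Matrix.linftyOpNormedAddCommGroup Matrix.linftyOpNormedRing
  Matrix.linftyOpNormedAlgebra

theorem Matrix.spectralRadius_lt_one_of_forall_norm_lt_one {ι : Type*} [Fintype ι]
    [DecidableEq ι] (M : Matrix ι ι ℂ) (h : ∀ μ ∈ spectrum ℂ M, ‖μ‖ < 1) :
    spectralRadius ℂ M < 1 := by
  cases isEmpty_or_nonempty ι
  · simp [spectralRadius, spectrum.of_subsingleton]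
  · simpa using spectrum.spectralRadius_lt_of_forall_lt M (r := 1)
      fun z hz => NNReal.coe_lt_coe.mp (by simpa using h z hz)

theorem Matrix.linfty_opNorm_map_ofReal {m n : Type*} [Fintype m] [Fintype n]
    (A : Matrix m n ℝ) :
    ‖A.map (Complex.ofReal : ℝ → ℂ)‖ = ‖A‖ := by
  simp [linfty_opNorm_def]

theorem Matrix.summable_norm_pow_of_spectralRadius_map_ofReal_lt_one {ι : Type*} [Fintype ι]
    [DecidableEq ι] {A : Matrix ι ι ℝ}
    (hA : spectralRadius ℂ (A.map (Complex.ofReal : ℝ → ℂ)) < 1) :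
    Summable fun k => ‖A ^ k‖ := by
  convert summable_norm_pow_of_spectralRadius_lt_one hA using 2 with k
  rw [← linfty_opNorm_map_ofReal]
  exact congrArg _ (map_pow Complex.ofRealHom.mapMatrix A k)

theorem Matrix.summable_pow_mul_mul_transpose_pow {ι : Type*} [Fintype ι] [DecidableEq ι]
    {A : Matrix ι ι ℝ} (hA : spectralRadius ℂ (A.map (Complex.ofReal : ℝ → ℂ)) < 1)
    (M : Matrix ι ι ℝ) : Summable fun k => A ^ k * M * Aᵀ ^ k := by
  have hAt : spectralRadius ℂ (Aᵀ.map (Complex.ofReal : ℝ → ℂ)) < 1 := by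
    rwa [transpose_map, spectralRadius_transpose]
  have ha := summable_norm_pow_of_spectralRadius_map_ofReal_lt_one hA
  have hb := summable_norm_pow_of_spectralRadius_map_ofReal_lt_one hAt
  exact summable_pow_mul_mul_pow ha hb M

end LinftyOpNorm

theorem Matrix.existsUnique_sub_mul_mul_transpose_eq {ι : Type*} [Fintype ι] [DecidableEq ι]
    {A : Matrix ι ι ℝ} (hA : spectralRadius ℂ (A.map (Complex.ofReal : ℝ → ℂ)) < 1)
    (M : Matrix ι ι ℝ) : ∃! W : Matrix ι ι ℝ, W - A * W * Aᵀ = M := by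
  have hW := (summable_pow_mul_mul_transpose_pow hA M).hasSum.sub_mul_mul_eq
  exact ⟨_, hW, fun W' hW' =>
    eq_of_sub_mul_mul_eq (summable_pow_mul_mul_transpose_pow hA _) (hW'.trans hW.symm)⟩

section Gramian

variable {κ n m : Type*} [Fintype n] [Fintype m] {C : κ → Matrix n m ℝ} {W : Matrix n n ℝ}

theorem Matrix.hasSum_vecMul_dotProduct_vecMul (h : HasSum (fun k => C k * (C k)ᵀ) W)
    (x : n → ℝ) : HasSum (fun k => x ᵥ* C k ⬝ᵥ x ᵥ* C k) (x ⬝ᵥ W *ᵥ x) := by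
  have hquad : ∀ k, x ⬝ᵥ (C k * (C k)ᵀ) *ᵥ x = x ᵥ* C k ⬝ᵥ x ᵥ* C k := fun k => by
    rw [← mulVec_mulVec, dotProduct_mulVec, mulVec_transpose]
  simp_rw [← hquad]
  exact h.map (AddMonoidHom.mk' (fun X => x ⬝ᵥ X *ᵥ x) fun X Y => by
    rw [add_mulVec, dotProduct_add])
    (continuous_const.dotProduct (continuous_id.matrix_mulVec continuous_const))

theorem Matrix.posSemidef_of_hasSum_mul_transpose (h : HasSum (fun k => C k * (C k)ᵀ) W) :
    W.PosSemidef := by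
  refine PosSemidef.of_dotProduct_mulVec_nonneg ?_ fun x => ?_
  · have := h.matrix_transpose
    simp only [transpose_mul, transpose_transpose] at this
    rw [IsHermitian, conjTranspose_eq_transpose_of_trivial, this.unique h]
  · rw [star_trivial]
    exact (hasSum_vecMul_dotProduct_vecMul h x).nonneg fun k => dotProduct_self_star_nonneg _

theorem Matrix.dotProduct_mulVec_eq_zero_iff_of_hasSum
    (h : HasSum (fun k => C k * (C k)ᵀ) W) (x : n → ℝ) :
    x ⬝ᵥ W *ᵥ x = 0 ↔ ∀ k, x ᵥ* C k = 0 := by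
  have hx := hasSum_vecMul_dotProduct_vecMul h x
  calc x ⬝ᵥ W *ᵥ x = 0 ↔ HasSum (fun k => x ᵥ* C k ⬝ᵥ x ᵥ* C k) 0 := ⟨(· ▸ hx), hx.unique⟩
    _ ↔ (fun k => x ᵥ* C k ⬝ᵥ x ᵥ* C k) = 0 :=
      hasSum_zero_iff_of_nonneg fun k => dotProduct_self_star_nonneg _
    _ ↔ ∀ k, x ᵥ* C k = 0 := by simp only [funext_iff, Pi.zero_apply, dotProduct_self_eq_zero]

theorem Matrix.posDef_iff_of_hasSum_mul_transpose (h : HasSum (fun k => C k * (C k)ᵀ) W) :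
    W.PosDef ↔ ∀ x : n → ℝ, (∀ k, x ᵥ* C k = 0) → x = 0 := by
  have hW := posSemidef_of_hasSum_mul_transpose h
  constructor
  · intro hpos x hx
    by_contra hx0
    have := hpos.dotProduct_mulVec_pos hx0
    rw [star_trivial, (dotProduct_mulVec_eq_zero_iff_of_hasSum h x).mpr hx] at this
    exact this.false
  · intro hctrl
    refine PosDef.of_dotProduct_mulVec_pos hW.isHermitian fun x hx => ?_
    rw [star_trivial]
    refine (hW.dotProduct_mulVec_nonneg x).lt_of_ne' fun h0 => hx (hctrl x ?_)
    rw [star_trivial] at h0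
    exact (dotProduct_mulVec_eq_zero_iff_of_hasSum h x).mp h0

end Gramian

open Polynomial in
theorem Matrix.vecMul_pow_mul_eq_zero_of_forall_lt_card {R ι m : Type*} [CommRing R]
    [Nontrivial R] [Fintype ι] [DecidableEq ι] (A : Matrix ι ι R) (B : Matrix ι m R) {x : ι → R}
    (h : ∀ k < Fintype.card ι, x ᵥ* (A ^ k * B) = 0) (k : ℕ) : x ᵥ* (A ^ k * B) = 0 := by
  rw [pow_eq_aeval_mod_charpoly]
  by_cases h1 : A.charpoly = 1
  · simp [h1] -- `A ^ k = aeval A 0 = 0`: this is the case of an empty index type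
  have hdeg := natDegree_modByMonic_lt (X ^ k) A.charpoly_monic h1
  rw [charpoly_natDegree_eq_dim] at hdeg
  rw [aeval_eq_sum_range' hdeg, Matrix.sum_mul, vecMul_sum]
  refine Finset.sum_eq_zero fun i hi => ?_
  rw [smul_mul, vecMul_smul, h i (Finset.mem_range.mp hi), smul_zero]

/-- For `A` with spectral radius `< 1`, the Lyapunov–Stein equation `W - A W Aᵀ = B Bᵀ`
has a unique solution, namely `∑ₖ Aᵏ B Bᵀ (Aᵀ)ᵏ`; it is positive semidefinite, and it is
positive definite iff `(A, B)` is controllable. -/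
theorem stmt16 (n m : ℕ)
    (A : Matrix (Fin n) (Fin n) ℝ) (B : Matrix (Fin n) (Fin m) ℝ)
    (hstable : ∀ μ : ℂ, μ ∈ spectrum ℂ (A.map (Complex.ofReal : ℝ → ℂ)) →
      ‖μ‖ < 1) :
    (∃! W : Matrix (Fin n) (Fin n) ℝ, W - A * W * Aᵀ = B * Bᵀ) ∧
    ((∑' k : ℕ, A ^ k * (B * Bᵀ) * (Aᵀ) ^ k)
      - A * (∑' k : ℕ, A ^ k * (B * Bᵀ) * (Aᵀ) ^ k) * Aᵀ = B * Bᵀ) ∧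
    (∑' k : ℕ, A ^ k * (B * Bᵀ) * (Aᵀ) ^ k).PosSemidef ∧
    ((∑' k : ℕ, A ^ k * (B * Bᵀ) * (Aᵀ) ^ k).PosDef ↔
      ∀ x : Fin n → ℝ,
        (∀ k : ℕ, k < n → Matrix.vecMul x ((A ^ k) * B) = 0) → x = 0) := by
  have hA := spectralRadius_lt_one_of_forall_norm_lt_one _ hstable
  have hW := (summable_pow_mul_mul_transpose_pow hA (B * Bᵀ)).hasSum
  have hgram : HasSum (fun k => (A ^ k * B) * (A ^ k * B)ᵀ)
      (∑' k : ℕ, A ^ k * (B * Bᵀ) * Aᵀ ^ k) := by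
    simpa only [transpose_mul, transpose_pow, Matrix.mul_assoc] using hW
  refine ⟨existsUnique_sub_mul_mul_transpose_eq hA _, hW.sub_mul_mul_eq,
    posSemidef_of_hasSum_mul_transpose hgram, ?_⟩
  rw [posDef_iff_of_hasSum_mul_transpose hgram]
  exact ⟨fun h x hx => h x (vecMul_pow_mul_eq_zero_of_forall_lt_card A B (by simpa using hx)),
    fun h x hx => h x fun k _ => hx k⟩
end

section
/- Suppose the n×(m+n) matrix [B,A] has a full pivot structure J = {j₁,…,jₙ} with j₁ = m+1 (so the first column of A is a pivot-1 vector), and consider the example in which column jₖ of [B,A] equals the standard basis vector eₖ for each k and all other columns are zero. Then e₁ᵀK = 0 for the controllability matrix K = [B, AB, A²B, …], i.e., K has no pivot-1 column and hence no full pivot structure. -/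
/-- For a full pivot structure `J` with `j₁ = m + 1` (the first column of `A` is the
pivot-1 column), the example where column `J k` of `[B, A]` equals the standard basis
vector `e_k` and all other columns vanish satisfies `e₁ᵀ K = 0`: the first row of the
controllability matrix `K = [B, AB, A²B, …]` is identically zero. -/
theorem stmt17 (n m : ℕ) (hn : 0 < n)
    (B : Matrix (Fin n) (Fin m) ℝ) (A : Matrix (Fin n) (Fin n) ℝ)
    (J : Fin n → Fin (m + n)) (hJinj : Function.Injective J)
    (hJ1 : (J ⟨0, hn⟩ : ℕ) = m)
    -- column `c` of `B` is `e_k` if `J k = c` for some `k`, and `0` otherwise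
    (hB : ∀ (i : Fin n) (c : Fin m),
      B i c = if ∃ k : Fin n, (J k : ℕ) = (c : ℕ) ∧ k = i then 1 else 0)
    -- column `c` of `A` is `e_k` if `J k = m + c` for some `k`, and `0` otherwise
    (hA : ∀ (i c : Fin n),
      A i c = if ∃ k : Fin n, (J k : ℕ) = m + (c : ℕ) ∧ k = i then 1 else 0) :
    ∀ (t : ℕ) (i : Fin m), ((A ^ t) * B) ⟨0, hn⟩ i = 0 := by
  -- Row 0 of B is zero
  have hB0 : ∀ c : Fin m, B ⟨0, hn⟩ c = 0 := by
    intro c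
    rw [hB]
    rw [if_neg]
    rintro ⟨k, hk, rfl⟩
    rw [hJ1] at hk
    omega
  -- Row 0 of A is e₀
  have hA0 : ∀ c : Fin n, A ⟨0, hn⟩ c = if c = ⟨0, hn⟩ then 1 else 0 := by
    intro c
    rw [hA]
    by_cases hc : c = ⟨0, hn⟩
    · subst hc
      rw [if_pos ⟨⟨0, hn⟩, by simp [hJ1], rfl⟩, if_pos rfl]
    · rw [if_neg, if_neg hc]
      rintro ⟨k, hk, rfl⟩
      rw [hJ1] at hk
      exact hc (Fin.ext (show (c : ℕ) = 0 by omega))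
  -- Row 0 of A^t is e₀
  have hpow : ∀ t : ℕ, ∀ c : Fin n, (A ^ t) ⟨0, hn⟩ c = if c = ⟨0, hn⟩ then 1 else 0 := by
    intro t
    induction t with
    | zero => intro c; simp [Matrix.one_apply, eq_comm]
    | succ t ih =>
      intro c
      rw [pow_succ, Matrix.mul_apply]
      rw [Finset.sum_eq_single ⟨0, hn⟩]
      · rw [ih, if_pos rfl, one_mul, hA0]
      · intro b _ hb
        rw [ih, if_neg hb, zero_mul]
      · intro h; exact absurd (Finset.mem_univ _) h
  intro t i
  rw [Matrix.mul_apply]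
  rw [Finset.sum_eq_single ⟨0, hn⟩]
  · rw [hpow, if_pos rfl, one_mul, hB0]
  · intro b _ hb
    rw [hpow, if_neg hb, zero_mul]
  · intro h; exact absurd (Finset.mem_univ _) h
end

section
/- Let S be the 3×3 matrix [[0, 36/125, −48/125],[0, −12/25, 16/25],[−3/5, 16/25, 12/25]]. Then S³ = (544/625)·S, and with T = [[3/5, 16/25],[0, 3/5],[0, 0]], every entry in the last row of the matrix [T, ST, S²T, S³T, …, S^jT, …] is nonpositive for all j ≥ 0. -/
set_option maxHeartbeats 1000000


/-- For the specific matrices `S` and `T`, one has `S³ = (544/625) · S`, and every entry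
of the last row of `[T, ST, S²T, S³T, …]` is nonpositive. -/
theorem stmt19
    (S : Matrix (Fin 3) (Fin 3) ℝ)
    (hS : S = !![0, 36/125, -48/125; 0, -12/25, 16/25; -3/5, 16/25, 12/25])
    (T : Matrix (Fin 3) (Fin 2) ℝ)
    (hT : T = !![3/5, 16/25; 0, 3/5; 0, 0]) :
    S ^ 3 = (544 / 625 : ℝ) • S ∧ ∀ (j : ℕ) (c : Fin 2), ((S ^ j) * T) 2 c ≤ 0 := by
  subst hS hT
  have h3 : (!![0, 36/125, -48/125; 0, -12/25, 16/25; -3/5, 16/25, 12/25] :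
      Matrix (Fin 3) (Fin 3) ℝ) ^ 3
      = (544 / 625 : ℝ) • !![0, 36/125, -48/125; 0, -12/25, 16/25; -3/5, 16/25, 12/25] := by
    rw [pow_succ, pow_succ, pow_one, Matrix.mul_fin_three, Matrix.mul_fin_three]
    ext i j
    fin_cases i <;> fin_cases j <;> norm_num [Matrix.smul_apply]
  refine ⟨h3, ?_⟩
  set S : Matrix (Fin 3) (Fin 3) ℝ := !![0, 36/125, -48/125; 0, -12/25, 16/25; -3/5, 16/25, 12/25]
  set T : Matrix (Fin 3) (Fin 2) ℝ := !![3/5, 16/25; 0, 3/5; 0, 0]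
  intro j
  induction j using Nat.strong_induction_on with
  | _ j ih =>
    match j with
    | 0 => intro c; fin_cases c <;> simp [S, T, Matrix.mul_apply, Fin.sum_univ_succ]
    | 1 => intro c; fin_cases c <;>
        (simp [S, T, pow_one, Matrix.mul_apply, Fin.sum_univ_succ]; norm_num)
    | 2 => intro c; fin_cases c <;>
        (simp [S, T, pow_succ, Matrix.mul_apply, Fin.sum_univ_succ]; norm_num)
    | (k+3) =>
      intro c
      have : S ^ (k + 3) = (544 / 625 : ℝ) • S ^ (k + 1) := by
        calc S ^ (k + 3) = S ^ k * S ^ 3 := by rw [pow_add]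
        _ = S ^ k * ((544 / 625 : ℝ) • S) := by rw [h3]
        _ = (544 / 625 : ℝ) • (S ^ k * S) := by rw [Matrix.mul_smul]
        _ = (544 / 625 : ℝ) • S ^ (k + 1) := by rw [pow_succ]
      rw [this, Matrix.smul_mul, Matrix.smul_apply, smul_eq_mul]
      have := ih (k + 1) (by omega) c
      nlinarith
end
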